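/- arXiv:1510.04537 — 10 statements merged into one kernel-verified Lean document; each statement's English description precedes it below -/
import Mathlib

section
/- Let d ≥ 1 and let v_1, …, v_{d+1} ∈ ℝ^d satisfy the simplex conditions. Then for every w ∈ ℝ^d: w lies in the interior of the convex hull of {v_1, …, v_{d+1}} if and only if ⟨w, v_i⟩ > −1 for every i = 1, …, d+1. -/
/-!
Let `V` be the matrix with rows `vᵢ`. Its Gram matrix `G = V Vᵀ = (d+1) • 1 - J` satisfies
`G² = (d+1) • G` and `tr G = (d+1) d`, so the squared Frobenius norm of `Vᵀ V - (d+1) • 1`, which is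
`tr G² - 2 (d+1) tr G + (d+1)² d`, vanishes: `u = (d+1)⁻¹ ∑ ⟨u, vᵢ⟩ vᵢ` for every `u`.
Since also `∑ vᵢ = 0`, the numbers `tᵢ = (⟨u, vᵢ⟩ + 1) / (d+1)` are barycentric coordinates of `u`:
the convex hull is the intersection of the half-spaces `⟨u, vᵢ⟩ ≥ -1`, and its interior is cut
out by the strict inequalities.
-/

open Matrix Set

theorem Matrix.transpose_mul_self_eq_smul_one {m n : Type*} [Fintype m] [Fintype n]
    [DecidableEq n] {V : Matrix m n ℝ} {c : ℝ} (hsq : V * Vᵀ * (V * Vᵀ) = c • (V * Vᵀ))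
    (htr : (V * Vᵀ).trace = c * Fintype.card n) :
    Vᵀ * V = c • 1 := by
  have hcycle : (Vᵀ * V * (Vᵀ * V)).trace = (V * Vᵀ * (V * Vᵀ)).trace := by
    simp only [← Matrix.mul_assoc]
    rw [trace_mul_comm]
    simp only [← Matrix.mul_assoc]
  have hzero : ((Vᵀ * V - c • 1)ᴴ * (Vᵀ * V - c • 1)).trace = 0 :=
    calc ((Vᵀ * V - c • 1)ᴴ * (Vᵀ * V - c • 1)).trace
        = (V * Vᵀ * (V * Vᵀ)).trace - 2 * c * (V * Vᵀ).trace + c ^ 2 * Fintype.card n := by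
          simp only [conjTranspose_eq_transpose_of_trivial, transpose_sub, transpose_mul,
            transpose_transpose, transpose_smul, transpose_one, sub_mul, mul_sub, trace_sub,
            hcycle, Matrix.smul_mul, Matrix.mul_smul, Matrix.one_mul, Matrix.mul_one, trace_smul,
            trace_one, smul_smul, smul_eq_mul, trace_mul_comm Vᵀ V]
          ring
      _ = 0 := by rw [hsq, trace_smul, htr, smul_eq_mul]; ring
  rwa [trace_conjTranspose_mul_self_eq_zero_iff, sub_eq_zero] at hzero

theorem interior_setOf_le_dotProduct {n : Type*} [Fintype n] {a : n → ℝ} (ha : a ≠ 0) (c : ℝ) :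
    interior {u | c ≤ u ⬝ᵥ a} = {u | c < u ⬝ᵥ a} := by
  let f : (n → ℝ) →ₗ[ℝ] ℝ := (dotProductBilin ℝ ℝ).flip a
  have hsurj : Function.Surjective f := fun t =>
    ⟨(t / (a ⬝ᵥ a)) • a, by
      change _ ⬝ᵥ a = t
      rw [smul_dotProduct, smul_eq_mul, div_mul_cancel₀ _ (dotProduct_self_eq_zero.not.mpr ha)]⟩
  have := (f.isOpenMap_of_finiteDimensional hsurj).preimage_interior_eq_interior_preimage
    (LinearMap.continuous_of_finiteDimensional f) (Ici c)
  rw [interior_Ici] at this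
  exact this.symm

variable {ι n : Type*} [Fintype ι] [Fintype n]

structure IsRegularSimplex (v : ι → n → ℝ) : Prop where
  card_eq : Fintype.card ι = Fintype.card n + 1
  dotProduct_self : ∀ i, v i ⬝ᵥ v i = Fintype.card n
  dotProduct_of_ne : Pairwise fun i j => v i ⬝ᵥ v j = -1

namespace IsRegularSimplex

variable {v : ι → n → ℝ}

theorem dotProduct_eq [DecidableEq ι] (hv : IsRegularSimplex v) (i j : ι) :
    v i ⬝ᵥ v j = if i = j then (Fintype.card n : ℝ) else -1 := by
  split_ifs with h
  · exact h ▸ hv.dotProduct_self i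
  · exact hv.dotProduct_of_ne h

theorem sum_eq_zero (hv : IsRegularSimplex v) : ∑ i, v i = 0 := by
  classical
  rw [← dotProduct_self_eq_zero, sum_dotProduct]
  refine Finset.sum_eq_zero fun i _ => ?_
  simp [dotProduct_sum, hv.dotProduct_eq, Finset.sum_ite, Finset.filter_ne, Finset.filter_eq,
    hv.card_eq]

theorem mul_transpose_self [DecidableEq ι] (hv : IsRegularSimplex v) :
    of v * (of v)ᵀ = (Fintype.card ι : ℝ) • 1 - of fun _ _ => 1 := by
  ext i j
  change v i ⬝ᵥ v j = _
  rw [hv.dotProduct_eq, Matrix.sub_apply, Matrix.smul_apply, one_apply, hv.card_eq]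
  split_ifs <;> simp

theorem transpose_mul_self [DecidableEq n] (hv : IsRegularSimplex v) :
    (of v)ᵀ * of v = (Fintype.card ι : ℝ) • 1 := by
  classical
  have hJ : ((of fun _ _ => 1 : Matrix ι ι ℝ) * of fun _ _ => 1) =
      (Fintype.card ι : ℝ) • of fun _ _ => 1 := by
    ext; simp [mul_apply]
  refine transpose_mul_self_eq_smul_one ?_ ?_
  · simp only [hv.mul_transpose_self, sub_mul, mul_sub, hJ, Matrix.smul_mul, Matrix.mul_smul,
      Matrix.one_mul, Matrix.mul_one]
    module
  · simp [hv.mul_transpose_self, trace, hv.card_eq]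

theorem sum_dotProduct_smul (hv : IsRegularSimplex v) (u : n → ℝ) :
    ∑ i, (u ⬝ᵥ v i) • v i = (Fintype.card ι : ℝ) • u := by
  classical
  have := congrArg (· *ᵥ u) hv.transpose_mul_self
  simp only [← mulVec_mulVec, mulVec_transpose, smul_mulVec, one_mulVec] at this
  rw [← this, vecMul_eq_sum]
  simp only [mulVec, dotProduct_comm]
  rfl

theorem convexHull_range (hv : IsRegularSimplex v) :
    convexHull ℝ (range v) = {u | ∀ i, -1 ≤ u ⬝ᵥ v i} := by
  have hc : (0 : ℝ) < Fintype.card ι := by rw [hv.card_eq]; positivity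
  refine Subset.antisymm (convexHull_min ?_ ?_) fun u hu => ?_
  · rintro _ ⟨j, rfl⟩ i
    rcases eq_or_ne j i with rfl | hji
    · rw [hv.dotProduct_self]
      linarith [(Nat.cast_nonneg _ : (0 : ℝ) ≤ Fintype.card n)]
    · rw [hv.dotProduct_of_ne hji]
  · simp only [ofPred_forall]
    exact convex_iInter fun i =>
      convex_halfSpace_ge ((dotProductBilin ℝ ℝ).flip (v i)).isLinear _
  · have hsum : ∑ i, (u ⬝ᵥ v i + 1) / Fintype.card ι = 1 := by
      rw [← Finset.sum_div, Finset.sum_add_distrib, ← dotProduct_sum, hv.sum_eq_zero,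
        dotProduct_zero, zero_add, Finset.sum_const, Finset.card_univ, nsmul_one, div_self hc.ne']
    have hcomb : ∑ i, ((u ⬝ᵥ v i + 1) / Fintype.card ι) • v i = u := by
      simp only [div_eq_inv_mul, mul_smul, ← Finset.smul_sum, add_smul, Finset.sum_add_distrib,
        one_smul, hv.sum_dotProduct_smul, hv.sum_eq_zero, add_zero, smul_smul,
        inv_mul_cancel₀ hc.ne']
    rw [← hcomb]
    refine (convex_convexHull ℝ _).sum_mem (fun i _ => ?_) hsum
      fun i _ => subset_convexHull ℝ _ (mem_range_self i)
    exact div_nonneg (by linarith [hu i]) hc.le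

theorem interior_convexHull_range [Nonempty n] (hv : IsRegularSimplex v) :
    interior (convexHull ℝ (range v)) = {u | ∀ i, -1 < u ⬝ᵥ v i} := by
  have hne : ∀ i, v i ≠ 0 := fun i h => by
    have := hv.dotProduct_self i
    rw [h, zero_dotProduct, eq_comm, Nat.cast_eq_zero] at this
    exact Fintype.card_ne_zero this
  rw [hv.convexHull_range, ofPred_forall, interior_iInter_of_finite, ofPred_forall]
  simp_rw [interior_setOf_le_dotProduct (hne _)]

end IsRegularSimplex

/-- `w` lies in the interior of the convex hull of the simplex vectors
iff `⟨w, vᵢ⟩ > -1` for every `i`. -/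
theorem mem_interior_convexHull_simplex_iff (d : ℕ) (hd : 1 ≤ d)
    (v : Fin (d + 1) → Fin d → ℝ)
    (hnorm : ∀ i, ∑ k, v i k ^ 2 = (d : ℝ))
    (hinner : ∀ i j, i ≠ j → ∑ k, v i k * v j k = -1)
    (w : Fin d → ℝ) :
    w ∈ interior (convexHull ℝ (Set.range v)) ↔ ∀ i, ∑ k, w k * v i k > -1 := by
  have : Nonempty (Fin d) := ⟨⟨0, hd⟩⟩
  have hv : IsRegularSimplex v :=
    { card_eq := by simp
      dotProduct_self := fun i => by simpa [dotProduct, sq] using hnorm i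
      dotProduct_of_ne := hinner }
  rw [hv.interior_convexHull_range]
  rfl
end

section
/- Fix d ≥ 1, vectors v_1, …, v_{d+1} ∈ ℝ^d satisfying the simplex conditions, transaction cost coefficients κ_k⁺, κ_k⁻ ≥ 0 (k = 1, …, d), and an invertible d×d real matrix σ. Suppose that |x (σᵀ)^{-1}| < 1/(2√d) for every row vector x ∈ Π_{j=1}^d [−(κ_j⁻+κ_j⁺), κ_j⁻+κ_j⁺]. Then for every β ∈ B, the matrix σᵀ + β is invertible and v_i β (σᵀ+β)^{-1} v_jᵀ > −1 for all i, j ∈ {1, …, d+1} (v_i treated as row vectors). -/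
open scoped BigOperators
open Matrix

/-!
Let `V` be the matrix with rows `vᵢ`. The simplex conditions say `V Vᵀ = (d+1) • 1 - J`
(`J` the all-ones matrix), and they force `Vᵀ V = (d+1) • 1`. Consequently `β = Vᵀ W` with
`0 ≤ W ≤ (κ⁺+κ⁻)/(d+1)` columnwise, and every row of `β` as well as every `vᵢ β` lies in the box
`|xₖ| ≤ κₖ⁺ + κₖ⁻`. By hypothesis each row of `M = β (σᵀ)⁻¹` then has norm `< 1/(2√d)`, so
`z ↦ z M` has norm `≤ 1/2` and `σᵀ + β = (1 + M) σᵀ` is invertible. For `y = vᵢ β (σᵀ+β)⁻¹` we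
have `y + y M = vᵢ β (σᵀ)⁻¹`, whence `‖y‖ ≤ 2 ‖vᵢ β (σᵀ)⁻¹‖ < 1/√d`, and Cauchy–Schwarz with
`‖vⱼ‖ = √d` gives `|y ⬝ vⱼ| < 1`.
-/

/-- The set `B` of matrices whose `k`-th column is `∑ⱼ w_{jk} vⱼᵀ` with
`w_{jk} ∈ [0, (κₖ⁺+κₖ⁻)/(d+1)]`. -/
def simplexB (d : ℕ) (v : Fin (d + 1) → Fin d → ℝ) (κp κm : Fin d → ℝ) :
    Set (Matrix (Fin d) (Fin d) ℝ) :=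
  {β | ∃ w : Fin (d + 1) → Fin d → ℝ,
      (∀ j k, w j k ∈ Set.Icc (0 : ℝ) ((κp k + κm k) / (d + 1))) ∧
      ∀ a k, β a k = ∑ j, w j k * v j a}

open WithLp

section TightFrame

variable {ι κ : Type*} [Fintype ι] [Fintype κ]

lemma of_one_mul_of_one :
    (of fun _ _ => (1 : ℝ) : Matrix ι ι ℝ) * of (fun _ _ => 1) =
      (Fintype.card ι : ℝ) • of fun _ _ => 1 := by
  ext; simp [mul_apply]

/- `J V = 0` since `(J V)(J V)ᵀ = J (n • 1 - J) J = 0`. Then `H = n • 1 - Vᵀ V` is symmetric with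
`H * H = n • H` and `trace H = 0`, so `trace (Hᵀ H) = 0`. -/
theorem transpose_mul_self_eq_of_mul_transpose_eq [DecidableEq ι] [DecidableEq κ]
    (V : Matrix ι κ ℝ) (hcard : Fintype.card κ + 1 = Fintype.card ι)
    (hV : V * Vᵀ = (Fintype.card ι : ℝ) • 1 - of fun _ _ => 1) :
    Vᵀ * V = (Fintype.card ι : ℝ) • 1 := by
  set n : ℝ := (Fintype.card ι : ℝ)
  set J : Matrix ι ι ℝ := of fun _ _ => 1
  have hJJ : J * J = n • J := of_one_mul_of_one
  have hJV : J * V = 0 := by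
    rw [← self_mul_conjTranspose_eq_zero, conjTranspose_eq_transpose_of_trivial,
      transpose_mul, show Jᵀ = J from rfl, Matrix.mul_assoc, ← Matrix.mul_assoc V, hV,
      Matrix.sub_mul, Matrix.mul_sub, Matrix.smul_mul, Matrix.one_mul, Matrix.mul_smul, hJJ,
      Matrix.mul_smul, hJJ, sub_self]
  have hGG : (Vᵀ * V) * (Vᵀ * V) = n • (Vᵀ * V) := by
    rw [Matrix.mul_assoc, ← Matrix.mul_assoc V, hV, Matrix.sub_mul, Matrix.mul_sub,
      hJV, Matrix.mul_zero, sub_zero, Matrix.smul_mul, Matrix.one_mul, Matrix.mul_smul]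
  set H := n • 1 - Vᵀ * V
  have hHH : Hᴴ * H = n • H := by
    rw [conjTranspose_eq_transpose_of_trivial]
    simp only [H, transpose_sub, transpose_smul, transpose_one, transpose_mul,
      transpose_transpose, Matrix.sub_mul, Matrix.mul_sub, Matrix.smul_mul, Matrix.mul_smul,
      Matrix.one_mul, Matrix.mul_one, hGG, smul_sub, smul_smul]
    module
  have htrace : H.trace = 0 := by
    have hJ : J.trace = n := by simp [J, trace, n]
    have hcard' : (Fintype.card κ : ℝ) + 1 = n := by simp [n, ← hcard]
    rw [trace_sub, trace_smul, trace_one, trace_mul_comm, hV, trace_sub, trace_smul, trace_one,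
      hJ, smul_eq_mul, smul_eq_mul]
    linear_combination n * hcard'
  rw [← sub_eq_zero, ← neg_sub, neg_eq_zero, ← trace_conjTranspose_mul_self_eq_zero_iff, hHH,
    trace_smul, htrace, smul_zero]

end TightFrame

section Simplex

variable {d : ℕ} {v : Fin (d + 1) → Fin d → ℝ}
  (hnorm : ∀ i, ∑ k, v i k ^ 2 = (d : ℝ)) (hinner : ∀ i j, i ≠ j → ∑ k, v i k * v j k = -1)
include hnorm hinner

lemma simplex_mul_transpose : of v * (of v)ᵀ = ((d : ℝ) + 1) • 1 - of fun _ _ => 1 := by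
  ext i j
  rcases eq_or_ne i j with rfl | hij
  · simp [mul_apply, ← hnorm i, sq]
  · simp [mul_apply, hinner i j hij, hij]

lemma simplex_transpose_mul : (of v)ᵀ * of v = ((d : ℝ) + 1) • 1 := by
  simpa using transpose_mul_self_eq_of_mul_transpose_eq (of v) (by simp)
    (by simpa using simplex_mul_transpose hnorm hinner)

lemma sum_abs_simplex_le (a : Fin d) : ∑ j, |v j a| ≤ d + 1 := by
  have hcol : ∑ j, |v j a| ^ 2 = d + 1 := by
    simpa [mul_apply, sq] using congrFun (congrFun (simplex_transpose_mul hnorm hinner) a) a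
  have := sq_sum_le_card_mul_sum_sq (s := Finset.univ) (f := fun j => |v j a|)
  rw [hcol, Finset.card_univ, Fintype.card_fin] at this
  push_cast at this
  nlinarith [Finset.sum_nonneg fun j (_ : j ∈ Finset.univ) => abs_nonneg (v j a)]

end Simplex

lemma abs_sum_mul_le_of_mem_Icc {ι : Type*} [Fintype ι] {w u : ι → ℝ} {m : ℝ}
    (hw : ∀ j, w j ∈ Set.Icc 0 m) : |∑ j, w j * u j| ≤ m * ∑ j, |u j| :=
  calc |∑ j, w j * u j| ≤ ∑ j, w j * |u j| := by
        simpa [abs_mul, abs_of_nonneg (hw _).1] using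
          Finset.abs_sum_le_sum_abs (fun j => w j * u j) Finset.univ
    _ ≤ ∑ j, m * |u j| := Finset.sum_le_sum fun j _ => by gcongr; exact (hw j).2
    _ = m * ∑ j, |u j| := (Finset.mul_sum _ _ _).symm

section SimplexB

variable {d : ℕ} {v : Fin (d + 1) → Fin d → ℝ} {κp κm : Fin d → ℝ}
  {β : Matrix (Fin d) (Fin d) ℝ}

lemma exists_eq_transpose_mul_of_mem_simplexB (hβ : β ∈ simplexB d v κp κm) :
    ∃ W : Matrix (Fin (d + 1)) (Fin d) ℝ,
      (∀ j k, W j k ∈ Set.Icc 0 ((κp k + κm k) / (d + 1))) ∧ β = (of v)ᵀ * W := by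
  obtain ⟨w, hw, hβw⟩ := hβ
  exact ⟨of w, hw, ext fun a k => by simp [hβw, mul_apply, mul_comm]⟩

variable (hnorm : ∀ i, ∑ k, v i k ^ 2 = (d : ℝ))
  (hinner : ∀ i j, i ≠ j → ∑ k, v i k * v j k = -1)
include hnorm hinner

lemma abs_apply_le_of_mem_simplexB (hβ : β ∈ simplexB d v κp κm) (a k : Fin d) :
    |β a k| ≤ κp k + κm k := by
  obtain ⟨W, hW, rfl⟩ := exists_eq_transpose_mul_of_mem_simplexB hβ
  have hm : 0 ≤ (κp k + κm k) / (d + 1) := (hW 0 k).1.trans (hW 0 k).2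
  calc |((of v)ᵀ * W) a k| ≤ (κp k + κm k) / (d + 1) * ∑ j, |v j a| := by
        simpa [mul_apply, mul_comm] using
          abs_sum_mul_le_of_mem_Icc (u := fun j => v j a) fun j => hW j k
    _ ≤ (κp k + κm k) / (d + 1) * (d + 1) := by
        gcongr; exact sum_abs_simplex_le hnorm hinner a
    _ = κp k + κm k := by field_simp

lemma abs_vecMul_apply_le_of_mem_simplexB (hβ : β ∈ simplexB d v κp κm) (i : Fin (d + 1))
    (k : Fin d) : |(v i ᵥ* β) k| ≤ κp k + κm k := by
  obtain ⟨W, hW, rfl⟩ := exists_eq_transpose_mul_of_mem_simplexB hβ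
  have hentry : (v i ᵥ* ((of v)ᵀ * W)) k = (d + 1) * W i k - ∑ j, W j k := by
    change (of v * ((of v)ᵀ * W)) i k = _
    rw [← Matrix.mul_assoc, simplex_mul_transpose hnorm hinner]
    simp [mul_apply, sub_mul, Finset.sum_sub_distrib, one_apply]
  have hsum : ∑ j, W j k ∈ Set.Icc 0 (κp k + κm k) := by
    constructor
    · exact Finset.sum_nonneg fun j _ => (hW j k).1
    · calc ∑ j, W j k ≤ ∑ _j : Fin (d + 1), (κp k + κm k) / (d + 1) :=
            Finset.sum_le_sum fun j _ => (hW j k).2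
        _ = κp k + κm k := by
            simp only [Finset.sum_const, Finset.card_univ, Fintype.card_fin, nsmul_eq_mul,
              Nat.cast_add, Nat.cast_one]
            field_simp
  have hmul : (d + 1) * W i k ∈ Set.Icc 0 (κp k + κm k) := by
    constructor
    · exact mul_nonneg (by positivity) (hW i k).1
    · rw [← le_div_iff₀' (by positivity)]; exact (hW i k).2
  rw [hentry, abs_le]
  constructor <;> linarith [hsum.1, hsum.2, hmul.1, hmul.2]

end SimplexB

section EuclideanNorm

variable {ι κ : Type*} [Fintype ι] [Fintype κ]

lemma norm_toLp_eq_sqrt (x : ι → ℝ) : ‖toLp 2 x‖ = √(∑ i, x i ^ 2) := by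
  simp [EuclideanSpace.norm_eq]

lemma abs_dotProduct_le_norm_mul_norm (x y : ι → ℝ) :
    |x ⬝ᵥ y| ≤ ‖toLp 2 x‖ * ‖toLp 2 y‖ := by
  simpa [EuclideanSpace.inner_toLp_toLp, dotProduct_comm] using
    abs_real_inner_le_norm (toLp 2 x) (toLp 2 y)

lemma norm_vecMul_sq_le (z : ι → ℝ) (M : Matrix ι κ ℝ) :
    ‖toLp 2 (z ᵥ* M)‖ ^ 2 ≤ ‖toLp 2 z‖ ^ 2 * ∑ a, ‖toLp 2 (M a)‖ ^ 2 := by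
  simp only [EuclideanSpace.real_norm_sq_eq]
  calc ∑ k, (z ᵥ* M) k ^ 2 ≤ ∑ k, (∑ a, z a ^ 2) * ∑ a, M a k ^ 2 :=
        Finset.sum_le_sum fun k _ => Finset.sum_mul_sq_le_sq_mul_sq _ _ _
    _ = (∑ a, z a ^ 2) * ∑ a, ∑ k, M a k ^ 2 := by rw [← Finset.mul_sum, Finset.sum_comm]

lemma norm_vecMul_le_of_norm_row_le {M : Matrix ι κ ℝ} {ρ : ℝ} (hρ : 0 ≤ ρ)
    (hM : ∀ a, ‖toLp 2 (M a)‖ ≤ ρ) (z : ι → ℝ) :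
    ‖toLp 2 (z ᵥ* M)‖ ≤ √(Fintype.card ι) * ρ * ‖toLp 2 z‖ := by
  rw [← pow_le_pow_iff_left₀ (norm_nonneg _) (by positivity) two_ne_zero, mul_pow, mul_pow,
    Real.sq_sqrt (Nat.cast_nonneg _), mul_comm]
  refine (norm_vecMul_sq_le z M).trans (mul_le_mul_of_nonneg_left ?_ (sq_nonneg _))
  calc ∑ a, ‖toLp 2 (M a)‖ ^ 2 ≤ ∑ _a : ι, ρ ^ 2 :=
        Finset.sum_le_sum fun a _ => pow_le_pow_left₀ (norm_nonneg _) (hM a) 2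
    _ = Fintype.card ι * ρ ^ 2 := by simp

variable {r : ℝ}

lemma one_sub_mul_norm_le_of_add_vecMul_eq {M : Matrix ι ι ℝ}
    (hM : ∀ z, ‖toLp 2 (z ᵥ* M)‖ ≤ r * ‖toLp 2 z‖) {x y : ι → ℝ} (h : y + y ᵥ* M = x) :
    (1 - r) * ‖toLp 2 y‖ ≤ ‖toLp 2 x‖ := by
  have hy : toLp 2 y = toLp 2 x - toLp 2 (y ᵥ* M) := by rw [← h]; simp
  have := norm_sub_le (toLp 2 x) (toLp 2 (y ᵥ* M))
  rw [← hy] at this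
  linarith [hM y]

lemma isUnit_one_add_of_norm_vecMul_le [DecidableEq ι] {M : Matrix ι ι ℝ}
    (hM : ∀ z, ‖toLp 2 (z ᵥ* M)‖ ≤ r * ‖toLp 2 z‖) (hr : r < 1) : IsUnit (1 + M) := by
  rw [isUnit_iff_isUnit_det, isUnit_iff_ne_zero]
  intro hdet
  obtain ⟨z, hz0, hz⟩ := exists_vecMul_eq_zero_iff.mpr hdet
  rw [vecMul_add, vecMul_one] at hz
  have hle := one_sub_mul_norm_le_of_add_vecMul_eq hM hz
  rw [toLp_zero, norm_zero] at hle
  have : ‖toLp 2 z‖ = 0 := le_antisymm (by nlinarith [norm_nonneg (toLp 2 z)]) (norm_nonneg _)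
  exact hz0 (by simpa using this)

variable [DecidableEq ι] {A β : Matrix ι ι ℝ}

lemma one_add_mul_nonsing_inv_mul (hA : IsUnit A) : (1 + β * A⁻¹) * A = A + β := by
  rw [Matrix.add_mul, Matrix.one_mul, Matrix.mul_assoc,
    nonsing_inv_mul _ ((isUnit_iff_isUnit_det _).1 hA), Matrix.mul_one]

variable (hA : IsUnit A) (hM : ∀ z, ‖toLp 2 (z ᵥ* (β * A⁻¹))‖ ≤ r * ‖toLp 2 z‖)
  (hr : r < 1)
include hA hM hr

lemma isUnit_add_of_norm_vecMul_mul_inv_le : IsUnit (A + β) :=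
  one_add_mul_nonsing_inv_mul hA ▸ (isUnit_one_add_of_norm_vecMul_le hM hr).mul hA

lemma one_sub_mul_norm_vecMul_inv_add_le (u : ι → ℝ) :
    (1 - r) * ‖toLp 2 (u ᵥ* (A + β)⁻¹)‖ ≤ ‖toLp 2 (u ᵥ* A⁻¹)‖ := by
  refine one_sub_mul_norm_le_of_add_vecMul_eq hM ?_
  have hAβ := (isUnit_iff_isUnit_det _).1 (isUnit_add_of_norm_vecMul_mul_inv_le hA hM hr)
  have : (A + β) * A⁻¹ = 1 + β * A⁻¹ := by
    rw [← one_add_mul_nonsing_inv_mul hA, Matrix.mul_assoc,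
      mul_nonsing_inv _ ((isUnit_iff_isUnit_det _).1 hA), Matrix.mul_one]
  calc u ᵥ* (A + β)⁻¹ + u ᵥ* (A + β)⁻¹ ᵥ* (β * A⁻¹) = u ᵥ* (A + β)⁻¹ ᵥ* ((A + β) * A⁻¹) := by
        rw [this, vecMul_add, vecMul_one]
    _ = u ᵥ* A⁻¹ := by
        rw [← vecMul_vecMul, vecMul_vecMul u, nonsing_inv_mul _ hAβ, vecMul_one]

end EuclideanNorm

theorem sufficient_condition_for_assumption_general (d : ℕ) (hd : 1 ≤ d)
    (v : Fin (d + 1) → Fin d → ℝ)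
    (hnorm : ∀ i, ∑ k, v i k ^ 2 = (d : ℝ))
    (hinner : ∀ i j, i ≠ j → ∑ k, v i k * v j k = -1)
    (κp κm : Fin d → ℝ)
    (σ : Matrix (Fin d) (Fin d) ℝ) (hσ : IsUnit σ.det)
    (hsmall : ∀ x : Fin d → ℝ,
      (∀ k, x k ∈ Set.Icc (-(κm k + κp k)) (κm k + κp k)) →
      Real.sqrt (∑ k, (Matrix.vecMul x σᵀ⁻¹ k) ^ 2) < 1 / (2 * Real.sqrt d)) :
    ∀ β ∈ simplexB d v κp κm,
      IsUnit (σᵀ + β) ∧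
      ∀ i j, Matrix.vecMul (Matrix.vecMul (v i) β) (σᵀ + β)⁻¹ ⬝ᵥ v j > -1 := by
  intro β hβ
  have hσT : IsUnit σᵀ := (isUnit_iff_isUnit_det _).2 (by rwa [det_transpose])
  have hsqrt : 0 < √d := Real.sqrt_pos.2 (by exact_mod_cast hd)
  have hbox (x : Fin d → ℝ) (hx : ∀ k, |x k| ≤ κp k + κm k) :
      ‖toLp 2 (x ᵥ* σᵀ⁻¹)‖ < 1 / (2 * √d) := by
    rw [norm_toLp_eq_sqrt]
    exact hsmall x fun k => by rw [add_comm (κm k)]; exact abs_le.1 (hx k)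
  have hM (z : Fin d → ℝ) : ‖toLp 2 (z ᵥ* (β * σᵀ⁻¹))‖ ≤ 1 / 2 * ‖toLp 2 z‖ := by
    have := norm_vecMul_le_of_norm_row_le (M := β * σᵀ⁻¹) (by positivity)
      (fun a => (hbox (β a) (abs_apply_le_of_mem_simplexB hnorm hinner hβ a)).le) z
    rwa [Fintype.card_fin, show √d * (1 / (2 * √d)) = 1 / 2 by field_simp] at this
  refine ⟨isUnit_add_of_norm_vecMul_mul_inv_le hσT hM (by norm_num), fun i j => ?_⟩
  have hx : ‖toLp 2 (v i ᵥ* β ᵥ* σᵀ⁻¹)‖ * (2 * √d) < 1 :=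
    (lt_div_iff₀ (by positivity)).1 <|
      hbox _ (abs_vecMul_apply_le_of_mem_simplexB hnorm hinner hβ i)
  have hy := one_sub_mul_norm_vecMul_inv_add_le hσT hM (by norm_num) (v i ᵥ* β)
  have hdot := abs_dotProduct_le_norm_mul_norm (v i ᵥ* β ᵥ* (σᵀ + β)⁻¹) (v j)
  rw [norm_toLp_eq_sqrt (v j), hnorm] at hdot
  nlinarith [abs_le.1 hdot]

/-- sufficient condition for Assumption 2.1 (Lemma 6.1 in the paper). -/
theorem sufficient_condition_for_assumption (d : ℕ) (hd : 1 ≤ d)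
    (v : Fin (d + 1) → Fin d → ℝ)
    (hnorm : ∀ i, ∑ k, v i k ^ 2 = (d : ℝ))
    (hinner : ∀ i j, i ≠ j → ∑ k, v i k * v j k = -1)
    (κp κm : Fin d → ℝ) (hκp : ∀ k, 0 ≤ κp k) (hκm : ∀ k, 0 ≤ κm k)
    (σ : Matrix (Fin d) (Fin d) ℝ) (hσ : IsUnit σ.det)
    (hsmall : ∀ x : Fin d → ℝ,
      (∀ k, x k ∈ Set.Icc (-(κm k + κp k)) (κm k + κp k)) →
      Real.sqrt (∑ k, (Matrix.vecMul x σᵀ⁻¹ k) ^ 2) < 1 / (2 * Real.sqrt d)) :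
    ∀ β ∈ simplexB d v κp κm,
      IsUnit (σᵀ + β) ∧
      ∀ i j, Matrix.vecMul (Matrix.vecMul (v i) β) (σᵀ + β)⁻¹ ⬝ᵥ v j > -1 :=
  sufficient_condition_for_assumption_general d hd v hnorm hinner κp κm σ hσ hsmall
end

section
/- Fix d ≥ 1, vectors v_1, …, v_{d+1} ∈ ℝ^d satisfying the simplex conditions, κ_k⁺, κ_k⁻ ≥ 0 (k = 1, …, d), and an invertible d×d real matrix σ. There exists a Borel measurable map Ψ : Γ → B such that for every a ∈ Γ one has a = σσᵀ + σΨ(a) + Ψ(a)ᵀσᵀ. -/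
open scoped BigOperators
open Matrix

/-- The set `Γ` of (symmetric) matrices `σσᵀ + σβ + βᵀσᵀ` with `β ∈ B`. -/
def simplexGamma (d : ℕ) (v : Fin (d + 1) → Fin d → ℝ) (κp κm : Fin d → ℝ)
    (σ : Matrix (Fin d) (Fin d) ℝ) : Set (Matrix (Fin d) (Fin d) ℝ) :=
  {a | ∃ β ∈ simplexB d v κp κm, a = σ * σᵀ + σ * β + βᵀ * σᵀ}

/-- Matrices carry the Borel σ-algebra (the product σ-algebra of entries). -/
instance matrixMeasurableSpace (d : ℕ) : MeasurableSpace (Matrix (Fin d) (Fin d) ℝ) :=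
  MeasurableSpace.pi

/-!
`Ψ a` is the point of the fibre `B ∩ {β | σσᵀ + σβ + βᵀσᵀ = a}` with the least sum of squared
entries. The fibre is compact and convex (`B` is the linear image of a box and the map is affine),
so this strictly convex function has a unique minimiser on it. Uniqueness gives measurability:
for closed `C`, `Ψ a ∈ C` iff for every rational `q`, whenever the fibre meets `{β | |β|² ≤ q}`
so does its part in `C`, and both conditions are preimages of images of compact sets.
-/

open Set

lemma IsCompact.exists_rat_gt_forall_lt {E : Type*} [TopologicalSpace E] {S : Set E}
    (hS : IsCompact S) {g : E → ℝ} (hg : ContinuousOn g S) {t : ℝ} (ht : ∀ β ∈ S, t < g β) :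
    ∃ q : ℚ, t < q ∧ ∀ β ∈ S, (q : ℝ) < g β := by
  rcases S.eq_empty_or_nonempty with rfl | hne
  · obtain ⟨q, hq⟩ := exists_rat_gt t
    exact ⟨q, hq, fun _ h => h.elim⟩
  obtain ⟨β₀, hβ₀, hmin⟩ := hS.exists_isMinOn hne hg
  obtain ⟨q, htq, hq⟩ := exists_rat_btwn (ht β₀ hβ₀)
  exact ⟨q, htq, fun β hβ => hq.trans_le (hmin hβ)⟩

section Selection

variable {E F X : Type*} [TopologicalSpace E] [MeasurableSpace E] [BorelSpace E]
  [TopologicalSpace F] [T2Space F] [MeasurableSpace F] [OpensMeasurableSpace F]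
  [MeasurableSpace X] {K : Set E} {f : E → F} {g : E → ℝ} {φ : X → F} {Ψ : X → E}

lemma measurable_of_isMinOn_fiber (hK : IsCompact K) (hf : Continuous f) (hg : Continuous g)
    (hφ : Measurable φ) (hΨK : ∀ x, Ψ x ∈ K ∩ f ⁻¹' {φ x})
    (hΨmin : ∀ x, IsMinOn g (K ∩ f ⁻¹' {φ x}) (Ψ x))
    (hunique : ∀ x, ∀ β ∈ K ∩ f ⁻¹' {φ x}, IsMinOn g (K ∩ f ⁻¹' {φ x}) β → β = Ψ x) :
    Measurable Ψ := by
  refine measurable_of_isClosed fun C hC => ?_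
  have key : Ψ ⁻¹' C = ⋂ q : ℚ,
      (φ ⁻¹' (f '' (K ∩ g ⁻¹' Iic (q : ℝ))))ᶜ ∪ φ ⁻¹' (f '' (K ∩ C ∩ g ⁻¹' Iic (q : ℝ))) := by
    ext x
    simp only [mem_preimage, mem_iInter, mem_union, mem_compl_iff, ← imp_iff_not_or, mem_image,
      mem_inter_iff, mem_Iic]
    constructor
    · rintro hC q ⟨β, ⟨hβK, hβq⟩, hβx⟩
      exact ⟨Ψ x, ⟨⟨(hΨK x).1, hC⟩, (hΨmin x ⟨hβK, hβx⟩).trans hβq⟩, (hΨK x).2⟩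
    · intro h
      by_contra hΨC
      have hlt : ∀ β ∈ K ∩ C ∩ f ⁻¹' {φ x}, g (Ψ x) < g β := by
        refine fun β hβ => lt_of_not_ge fun hle => hΨC ?_
        have hβmin : IsMinOn g (K ∩ f ⁻¹' {φ x}) β :=
          fun γ hγ => hle.trans (hΨmin x hγ)
        exact hunique x β ⟨hβ.1.1, hβ.2⟩ hβmin ▸ hβ.1.2
      have hcompact : IsCompact (K ∩ C ∩ f ⁻¹' {φ x}) :=
        (hK.inter_right hC).inter_right (isClosed_singleton.preimage hf)
      obtain ⟨q, hΨq, hq⟩ := hcompact.exists_rat_gt_forall_lt hg.continuousOn hlt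
      obtain ⟨β, ⟨⟨hβK, hβC⟩, hβq⟩, hβx⟩ := h q ⟨Ψ x, ⟨(hΨK x).1, hΨq.le⟩, (hΨK x).2⟩
      exact (hq β ⟨⟨hβK, hβC⟩, hβx⟩).not_ge hβq
  have hclosed : ∀ {S : Set E}, IsClosed S → MeasurableSet (φ ⁻¹' (f '' (K ∩ S))) :=
    fun hS => hφ ((hK.inter_right hS).image hf).isClosed.measurableSet
  rw [key]
  refine .iInter fun q => (hclosed (isClosed_Iic.preimage hg)).compl.union ?_
  rw [inter_assoc]
  exact hclosed (hC.inter (isClosed_Iic.preimage hg))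

end Selection

lemma exists_measurable_selection_of_strictConvexOn {E F X : Type*}
    [AddCommGroup E] [Module ℝ E] [TopologicalSpace E] [MeasurableSpace E] [BorelSpace E]
    [AddCommGroup F] [Module ℝ F] [TopologicalSpace F] [T2Space F] [MeasurableSpace F]
    [OpensMeasurableSpace F] [MeasurableSpace X] {K : Set E} (hK : IsCompact K)
    (hKconv : Convex ℝ K) (f : E →ᵃ[ℝ] F) (hf : Continuous f) {g : E → ℝ} (hg : Continuous g)
    (hgK : StrictConvexOn ℝ K g) {φ : X → F} (hφ : Measurable φ) (hφK : ∀ x, φ x ∈ f '' K) :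
    ∃ Ψ : X → E, Measurable Ψ ∧ ∀ x, Ψ x ∈ K ∧ f (Ψ x) = φ x := by
  have hfiber : ∀ x, ∃ β ∈ K ∩ f ⁻¹' {φ x}, IsMinOn g (K ∩ f ⁻¹' {φ x}) β := fun x =>
    (hK.inter_right (isClosed_singleton.preimage hf)).exists_isMinOn
      (hφK x) hg.continuousOn
  choose Ψ hΨK hΨmin using hfiber
  have hconv : ∀ x, StrictConvexOn ℝ (K ∩ f ⁻¹' {φ x}) g := fun x =>
    hgK.subset inter_subset_left (hKconv.inter ((convex_singleton _).affine_preimage f))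
  have hunique : ∀ x, ∀ β ∈ K ∩ f ⁻¹' {φ x}, IsMinOn g (K ∩ f ⁻¹' {φ x}) β → β = Ψ x :=
    fun x β hβ hβmin => (hconv x).eq_of_isMinOn hβmin (hΨmin x) hβ (hΨK x)
  exact ⟨Ψ, measurable_of_isMinOn_fiber hK hf hg hφ hΨK hΨmin hunique, hΨK⟩

namespace Matrix

variable {n m : Type*} [Fintype n] [Fintype m]

lemma strictConvexOn_sum_sq :
    StrictConvexOn ℝ univ (fun A : Matrix m n ℝ => ∑ i, ∑ j, A i j ^ 2) := by
  refine ⟨convex_univ, fun A _ B _ hAB a b ha hb hab => ?_⟩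
  obtain ⟨i₀, j₀, hne⟩ : ∃ i j, A i j ≠ B i j := by
    by_contra! h
    exact hAB (Matrix.ext h)
  have gap : ∀ x y : ℝ, (a * x + b * y) ^ 2 + a * b * (x - y) ^ 2 = a * x ^ 2 + b * y ^ 2 := by
    intro x y
    obtain rfl : b = 1 - a := by linarith
    ring
  have hab0 := mul_pos ha hb
  simp only [smul_eq_mul, Finset.mul_sum, ← Finset.sum_add_distrib, add_apply, smul_apply, ← gap]
  refine Finset.sum_lt_sum (fun i _ => Finset.sum_le_sum fun j _ => ?_)
    ⟨i₀, Finset.mem_univ _, Finset.sum_lt_sum (fun j _ => ?_) ⟨j₀, Finset.mem_univ _, ?_⟩⟩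
  · exact le_add_of_nonneg_right (by positivity)
  · exact le_add_of_nonneg_right (by positivity)
  · exact lt_add_of_pos_right _ (mul_pos hab0 (sq_pos_of_ne_zero (sub_ne_zero.2 hne)))

end Matrix

instance matrixBorelSpace (d : ℕ) : BorelSpace (Matrix (Fin d) (Fin d) ℝ) :=
  Pi.borelSpace

section Simplex

variable {d : ℕ}

lemma simplexB_eq_image (v : Fin (d + 1) → Fin d → ℝ) (κp κm : Fin d → ℝ) :
    simplexB d v κp κm = mulLeftLinearMap (Fin d) ℝ (of v)ᵀ ''
      univ.pi fun _ => univ.pi fun k => Icc 0 ((κp k + κm k) / (d + 1)) := by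
  have hcol : ∀ (w : Matrix (Fin (d + 1)) (Fin d) ℝ) a k,
      ((of v)ᵀ * w) a k = ∑ j, w j k * v j a := fun w a k => by
    simp only [mul_apply, transpose_apply, of_apply, mul_comm]
  ext β
  constructor
  · rintro ⟨w, hw, hβ⟩
    exact ⟨w, fun j _ k _ => hw j k, Matrix.ext fun a k => (hcol w a k).trans (hβ a k).symm⟩
  · rintro ⟨w, hw, rfl⟩
    exact ⟨w, fun j k => hw j trivial k trivial, hcol w⟩

lemma isCompact_simplexB (v : Fin (d + 1) → Fin d → ℝ) (κp κm : Fin d → ℝ) :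
    IsCompact (simplexB d v κp κm) := by
  rw [simplexB_eq_image]
  exact (isCompact_univ_pi fun _ => isCompact_univ_pi fun _ => isCompact_Icc).image
    (continuous_const.matrix_mul continuous_id)

lemma convex_simplexB (v : Fin (d + 1) → Fin d → ℝ) (κp κm : Fin d → ℝ) :
    Convex ℝ (simplexB d v κp κm) := by
  rw [simplexB_eq_image]
  exact (convex_pi fun _ _ => convex_pi fun _ _ => convex_Icc _ _).linear_image _

end Simplex

namespace Matrix

variable {n : Type*} [Fintype n] {R : Type*} [CommRing R]

def gramAffineMap (σ : Matrix n n R) : Matrix n n R →ᵃ[R] Matrix n n R where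
  toFun β := σ * σᵀ + σ * β + βᵀ * σᵀ
  linear := mulLeftLinearMap n R σ +
    mulRightLinearMap n R σᵀ ∘ₗ (transposeLinearEquiv n n R R).toLinearMap
  map_vadd' β γ := by
    simp only [vadd_eq_add, LinearMap.add_apply, LinearMap.coe_comp, LinearEquiv.coe_coe,
      Function.comp_apply, transposeLinearEquiv_apply, AddEquiv.toEquiv_eq_coe,
      Equiv.toFun_as_coe, EquivLike.coe_coe, transposeAddEquiv_apply, mulLeftLinearMap_apply,
      mulRightLinearMap_apply, transpose_add, mul_add, add_mul]
    abel

lemma continuous_gramAffineMap [TopologicalSpace R] [IsTopologicalRing R] (σ : Matrix n n R) :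
    Continuous (gramAffineMap σ) :=
  (continuous_const.add (continuous_const.matrix_mul continuous_id)).add
    (continuous_id.matrix_transpose.matrix_mul continuous_const)

end Matrix

theorem exists_measurable_Psi_general (d : ℕ)
    (v : Fin (d + 1) → Fin d → ℝ)
    (κp κm : Fin d → ℝ)
    (σ : Matrix (Fin d) (Fin d) ℝ) :
    ∃ Ψ : simplexGamma d v κp κm σ → Matrix (Fin d) (Fin d) ℝ,
      Measurable Ψ ∧
      ∀ a : simplexGamma d v κp κm σ,
        Ψ a ∈ simplexB d v κp κm ∧
        (a : Matrix (Fin d) (Fin d) ℝ) = σ * σᵀ + σ * Ψ a + (Ψ a)ᵀ * σᵀ := by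
  have hΓ : ∀ a : simplexGamma d v κp κm σ, a.1 ∈ gramAffineMap σ '' simplexB d v κp κm :=
    fun ⟨_, β, hβ, hβa⟩ => ⟨β, hβ, hβa.symm⟩
  obtain ⟨Ψ, hΨ, hsel⟩ := exists_measurable_selection_of_strictConvexOn
    (isCompact_simplexB v κp κm) (convex_simplexB v κp κm) (gramAffineMap σ)
    (continuous_gramAffineMap σ) (by fun_prop) (strictConvexOn_sum_sq.subset (subset_univ _)
      (convex_simplexB v κp κm)) measurable_subtype_coe hΓ
  exact ⟨Ψ, hΨ, fun a => ⟨(hsel a).1, (hsel a).2.symm⟩⟩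

/-- there is a Borel measurable map `Ψ : Γ → B` with
`a = σσᵀ + σΨ(a) + Ψ(a)ᵀσᵀ` for every `a ∈ Γ` (Lemma `lem:pp`(i)). -/
theorem exists_measurable_Psi (d : ℕ) (hd : 1 ≤ d)
    (v : Fin (d + 1) → Fin d → ℝ)
    (hnorm : ∀ i, ∑ k, v i k ^ 2 = (d : ℝ))
    (hinner : ∀ i j, i ≠ j → ∑ k, v i k * v j k = -1)
    (κp κm : Fin d → ℝ) (hκp : ∀ k, 0 ≤ κp k) (hκm : ∀ k, 0 ≤ κm k)
    (σ : Matrix (Fin d) (Fin d) ℝ) (hσ : IsUnit σ.det) :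
    ∃ Ψ : simplexGamma d v κp κm σ → Matrix (Fin d) (Fin d) ℝ,
      Measurable Ψ ∧
      ∀ a : simplexGamma d v κp κm σ,
        Ψ a ∈ simplexB d v κp κm ∧
        (a : Matrix (Fin d) (Fin d) ℝ) = σ * σᵀ + σ * Ψ a + (Ψ a)ᵀ * σᵀ :=
  exists_measurable_Psi_general d v κp κm σ
end

section
/- Fix d ≥ 1, vectors v_1, …, v_{d+1} ∈ ℝ^d satisfying the simplex conditions, and κ_k⁺, κ_k⁻ ≥ 0 (k = 1, …, d). There exists a Borel measurable map Φ : B → Π_{i=1}^d [−κ_i⁻, κ_i⁺] such that for every β ∈ B and every i = 1, …, d+1, the row vector v_i β + Φ(β) lies in Π_{j=1}^d [−κ_j⁻, κ_j⁺]. -/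
open scoped BigOperators
open Matrix

lemma measurable_finset_inf' {α : Type*} [MeasurableSpace α] {ι : Type*} (s : Finset ι)
    (hs : s.Nonempty) (f : ι → α → ℝ) (hf : ∀ i, Measurable (f i)) :
    Measurable fun b => s.inf' hs fun i => f i b := by
  induction hs using Finset.Nonempty.cons_induction with
  | singleton i => exact (by simpa using hf i)
  | cons i s hi hs ih =>
      have h : (fun b => (Finset.cons i s hi).inf' (Finset.cons_nonempty hi) fun j => f j b)
          = fun b => f i b ⊓ s.inf' hs fun j => f j b := by
        funext b; exact Finset.inf'_cons (α := ℝ) (f := fun j => f j b) (H := hs)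
      rw [h]
      exact (hf i).inf ih

/-- there is a Borel measurable map `Φ : B → Π [-κᵢ⁻, κᵢ⁺]` with
`vᵢ β + Φ(β) ∈ Π [-κⱼ⁻, κⱼ⁺]` for all `i` and `β ∈ B` (Lemma `lem:pp`(ii)). -/
theorem exists_measurable_Phi (d : ℕ) (hd : 1 ≤ d)
    (v : Fin (d + 1) → Fin d → ℝ)
    (hnorm : ∀ i, ∑ k, v i k ^ 2 = (d : ℝ))
    (hinner : ∀ i j, i ≠ j → ∑ k, v i k * v j k = -1)
    (κp κm : Fin d → ℝ) (hκp : ∀ k, 0 ≤ κp k) (hκm : ∀ k, 0 ≤ κm k) :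
    ∃ Φ : simplexB d v κp κm → (Fin d → ℝ),
      Measurable Φ ∧
      (∀ β : simplexB d v κp κm, ∀ k, Φ β k ∈ Set.Icc (-(κm k)) (κp k)) ∧
      ∀ β : simplexB d v κp κm, ∀ i k,
        Matrix.vecMul (v i) (β : Matrix (Fin d) (Fin d) ℝ) k + Φ β k
          ∈ Set.Icc (-(κm k)) (κp k) := by
  classical
  -- the i-th row of `v` times `β`, coordinate `k`
  set X : simplexB d v κp κm → Fin (d + 1) → Fin d → ℝ :=
    fun β i k => ∑ a, v i a * (β : Matrix (Fin d) (Fin d) ℝ) a k with hXdef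
  have hvecMul : ∀ (β : simplexB d v κp κm) (i : Fin (d + 1)) (k : Fin d),
      Matrix.vecMul (v i) (β : Matrix (Fin d) (Fin d) ℝ) k = X β i k := by
    intro β i k
    simp [hXdef, Matrix.vecMul, dotProduct]
  -- the key algebraic identity
  have key : ∀ (β : simplexB d v κp κm) (w : Fin (d + 1) → Fin d → ℝ),
      (∀ a k, (β : Matrix (Fin d) (Fin d) ℝ) a k = ∑ j, w j k * v j a) →
      ∀ i k, X β i k = (d + 1) * w i k - ∑ j, w j k := by
    intro β w hw i k
    have h1 : X β i k = ∑ j, w j k * ∑ a, v i a * v j a := by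
      simp only [hXdef]
      calc ∑ a, v i a * (β : Matrix (Fin d) (Fin d) ℝ) a k
          = ∑ a, ∑ j, w j k * (v i a * v j a) := by
            refine Finset.sum_congr rfl fun a _ => ?_
            rw [hw a k, Finset.mul_sum]
            exact Finset.sum_congr rfl fun j _ => by ring
        _ = ∑ j, ∑ a, w j k * (v i a * v j a) := Finset.sum_comm
        _ = ∑ j, w j k * ∑ a, v i a * v j a := by
            exact Finset.sum_congr rfl fun j _ => (Finset.mul_sum _ _ _).symm
    rw [h1]
    have h2 : ∀ j, w j k * ∑ a, v i a * v j a =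
        -(w j k) + (if j = i then w j k * d + w j k else 0) := by
      intro j
      by_cases hji : j = i
      · have hvv : ∑ a, v i a * v j a = (d : ℝ) := by
          subst hji
          rw [← hnorm j]
          exact Finset.sum_congr rfl fun a _ => by ring
        rw [hvv, if_pos hji]; ring
      · rw [hinner i j (fun h => hji h.symm), if_neg hji]; ring
    calc ∑ j, w j k * ∑ a, v i a * v j a
        = ∑ j, (-(w j k) + (if j = i then w j k * d + w j k else 0)) := by
          exact Finset.sum_congr rfl fun j _ => h2 j
      _ = (∑ j, -(w j k)) + ∑ j, (if j = i then w j k * d + w j k else 0) := by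
          rw [Finset.sum_add_distrib]
      _ = -(∑ j, w j k) + (w i k * d + w i k) := by
          rw [Finset.sum_neg_distrib, Finset.sum_ite_eq' Finset.univ i
            (fun j => w j k * d + w j k)]
          simp
      _ = (d + 1) * w i k - ∑ j, w j k := by ring
  have hne : (Finset.univ : Finset (Fin (d + 1))).Nonempty := Finset.univ_nonempty
  refine ⟨fun β k => -κm k - min 0 (Finset.univ.inf' hne fun i => X β i k), ?_, ?_, ?_⟩
  · -- measurability
    rw [measurable_pi_iff]
    intro k
    have hXm : ∀ i, Measurable fun β : simplexB d v κp κm => X β i k := by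
      intro i
      apply Finset.measurable_sum
      intro a _
      exact measurable_const.mul
        ((measurable_pi_apply k).comp ((measurable_pi_apply a).comp measurable_subtype_coe))
    exact measurable_const.sub
      ((measurable_const.min (measurable_finset_inf' _ hne _ hXm)))
  · -- Φ β k ∈ [-κm k, κp k]
    intro β k
    dsimp only
    obtain ⟨w, hwmem, hwrep⟩ := β.2
    have hkey := key β w hwrep
    have hd1 : (0 : ℝ) < (d : ℝ) + 1 := by positivity
    have hSle : ∑ j, w j k ≤ κp k + κm k := by
      calc ∑ j, w j k ≤ ∑ _j : Fin (d + 1), (κp k + κm k) / (d + 1) :=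
            Finset.sum_le_sum fun j _ => (hwmem j k).2
        _ = κp k + κm k := by
            rw [Finset.sum_const]
            simp only [Finset.card_univ, Fintype.card_fin, nsmul_eq_mul]
            push_cast
            field_simp
    have hS0 : 0 ≤ ∑ j, w j k := Finset.sum_nonneg fun j _ => (hwmem j k).1
    constructor
    · -- lower bound: min 0 _ ≤ 0
      have : min 0 (Finset.univ.inf' hne fun i => X β i k) ≤ 0 := min_le_left _ _
      linarith
    · -- upper bound: min 0 _ ≥ -(κp+κm)
      have h1 : ∀ i, -(κp k + κm k) ≤ X β i k := by
        intro i
        rw [hkey i k]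
        have := (hwmem i k).1
        nlinarith
      have h2 : -(κp k + κm k) ≤ Finset.univ.inf' hne fun i => X β i k :=
        Finset.le_inf' hne _ fun i _ => h1 i
      have h3 : -(κp k + κm k) ≤ min 0 (Finset.univ.inf' hne fun i => X β i k) :=
        le_min (by nlinarith [hκp k, hκm k]) h2
      linarith
  · -- v i β + Φ β ∈ [-κm, κp]
    intro β i k
    dsimp only
    rw [hvecMul]
    obtain ⟨w, hwmem, hwrep⟩ := β.2
    have hkey := key β w hwrep
    have hd1 : (0 : ℝ) < (d : ℝ) + 1 := by positivity
    have hS0 : 0 ≤ ∑ j, w j k := Finset.sum_nonneg fun j _ => (hwmem j k).1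
    set m := min 0 (Finset.univ.inf' hne fun i => X β i k) with hm
    have hm_le : m ≤ X β i k :=
      le_trans (min_le_right _ _) (Finset.inf'_le _ (Finset.mem_univ i))
    constructor
    · -- lower: X β i k + (-κm k - m) ≥ -κm k
      linarith
    · -- upper: X β i k - m ≤ κp k + κm k
      have : X β i k - m ≤ κp k + κm k := by
        rcases min_cases 0 (Finset.univ.inf' hne fun i => X β i k) with ⟨h0, hle⟩ | ⟨h0, hlt⟩
        · -- m = 0, inf' ≥ 0
          rw [hm, h0, sub_zero]
          have hw_ub := (hwmem i k).2
          rw [hkey i k]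
          have h := (le_div_iff₀ hd1).mp hw_ub
          nlinarith
        · -- m = inf', pick a minimizer j
          rw [hm, h0]
          obtain ⟨j, _, hj⟩ := Finset.exists_mem_eq_inf' hne fun i => X β i k
          rw [hj, hkey i k, hkey j k]
          have hw_ub := (hwmem i k).2
          have hwj0 := (hwmem j k).1
          have h := (le_div_iff₀ hd1).mp hw_ub
          nlinarith
      linarith
end

section
/- Let d = 2, σ = I (the 2×2 identity), κ_1⁺ = κ_1⁻ = κ_2⁻ = 0, κ_2⁺ = 3√2/4, and v_1 = (0, √2), v_2 = (√6/2, −√2/2), v_3 = (−√6/2, −√2/2). Then: (a) v_1, v_2, v_3 satisfy the simplex conditions for d = 2; (b) the matrix β with first column (0,0)ᵀ and second column (0, −1/2)ᵀ belongs to B; and (c) σᵀ + β is invertible and v_1 β (σᵀ+β)^{-1} v_1ᵀ = −2 < −1, so the condition 'v_i β (σᵀ+β)^{-1} v_jᵀ > −1 for all i, j' fails. -/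
open scoped BigOperators
open Matrix

/-- The simplex vectors of the counterexample: `v₁ = (0, √2)`,
`v₂ = (√6/2, -√2/2)`, `v₃ = (-√6/2, -√2/2)`. -/
noncomputable def exV : Fin 3 → Fin 2 → ℝ :=
  ![![0, Real.sqrt 2],
    ![Real.sqrt 6 / 2, -(Real.sqrt 2 / 2)],
    ![-(Real.sqrt 6 / 2), -(Real.sqrt 2 / 2)]]

/-- Transaction cost coefficients `κ₁⁺ = κ₁⁻ = κ₂⁻ = 0`, `κ₂⁺ = 3√2/4`. -/
noncomputable def exκp : Fin 2 → ℝ := ![0, 3 * Real.sqrt 2 / 4]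

noncomputable def exκm : Fin 2 → ℝ := ![0, 0]

/-- The matrix `β` with columns `(0,0)ᵀ` and `(0,-1/2)ᵀ`. -/
noncomputable def exβ : Matrix (Fin 2) (Fin 2) ℝ := !![0, 0; 0, -(1/2 : ℝ)]

lemma sq2 : Real.sqrt 2 * Real.sqrt 2 = 2 := Real.mul_self_sqrt (by norm_num)
lemma sq6 : Real.sqrt 6 * Real.sqrt 6 = 6 := Real.mul_self_sqrt (by norm_num)
lemma sqrt2_pos : (0:ℝ) < Real.sqrt 2 := Real.sqrt_pos.mpr (by norm_num)

lemma inv_eq : (((1 : Matrix (Fin 2) (Fin 2) ℝ)ᵀ + exβ)⁻¹) = !![1, 0; 0, 2] := by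
  apply Matrix.inv_eq_right_inv
  show ((1 : Matrix (Fin 2) (Fin 2) ℝ)ᵀ + exβ) * !![1, 0; 0, 2] = 1
  rw [Matrix.transpose_one]
  ext i j
  fin_cases i <;> fin_cases j <;>
    simp [exβ, Matrix.mul_apply, Fin.sum_univ_two, Matrix.one_apply] <;> norm_num

/-- Assumption 2.1 is essential — with `σ = I` and the above data,
the vectors satisfy the simplex conditions, `β ∈ B`, but
`v₁ β (σᵀ+β)⁻¹ v₁ᵀ = -2 < -1`, so condition (2.9) fails. -/
theorem assumption_fails_example :
    ((∀ i, ∑ k, exV i k ^ 2 = (2 : ℝ)) ∧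
      (∀ i j, i ≠ j → ∑ k, exV i k * exV j k = -1)) ∧
    exβ ∈ simplexB 2 exV exκp exκm ∧
    (IsUnit ((1 : Matrix (Fin 2) (Fin 2) ℝ)ᵀ + exβ) ∧
      Matrix.vecMul (Matrix.vecMul (exV 0) exβ)
          (((1 : Matrix (Fin 2) (Fin 2) ℝ)ᵀ + exβ)⁻¹) ⬝ᵥ exV 0 = -2 ∧
      ¬ ∀ i j, Matrix.vecMul (Matrix.vecMul (exV i) exβ)
          (((1 : Matrix (Fin 2) (Fin 2) ℝ)ᵀ + exβ)⁻¹) ⬝ᵥ exV j > -1) := by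
  have hdot : Matrix.vecMul (Matrix.vecMul (exV 0) exβ)
      (((1 : Matrix (Fin 2) (Fin 2) ℝ)ᵀ + exβ)⁻¹) ⬝ᵥ exV 0 = -2 := by
    rw [inv_eq]
    simp [exV, exβ, Matrix.vecMul, dotProduct, Fin.sum_univ_two]
    try nlinarith [sq2]
  refine ⟨⟨?_, ?_⟩, ?_, ?_, hdot, ?_⟩
  · intro i
    fin_cases i <;> simp [exV, Fin.sum_univ_two] <;> try nlinarith [sq2, sq6]
  · intro i j hij
    fin_cases i <;> fin_cases j <;> simp_all [exV, Fin.sum_univ_two] <;>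
      nlinarith [sq2, sq6]
  · refine ⟨fun j k => if k = 1 then (if j = 0 then 0 else Real.sqrt 2 / 4) else 0,
      ?_, ?_⟩
    · intro j k
      fin_cases j <;> fin_cases k <;>
        simp [exκp, exκm, Set.mem_Icc] <;>
        first
          | (constructor <;> nlinarith [sqrt2_pos])
          | nlinarith [sqrt2_pos]
    · intro a k
      fin_cases a <;> fin_cases k <;>
        simp [exβ, exV, Fin.sum_univ_three, Matrix.vecHead, Matrix.vecTail] <;>
        nlinarith [sq2]
  · rw [Matrix.isUnit_iff_isUnit_det]
    have hdet : ((1 : Matrix (Fin 2) (Fin 2) ℝ)ᵀ + exβ).det = 1/2 := by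
      rw [Matrix.transpose_one]
      simp [Matrix.det_fin_two, exβ, Matrix.one_apply]
      norm_num
    rw [hdet]
    exact isUnit_iff_ne_zero.mpr (by norm_num)
  · intro h
    have := h 0 0
    rw [hdot] at this
    norm_num at this
end

section
/- Let d = 2 and let v_1, v_2, v_3 ∈ ℝ² satisfy the simplex conditions. Let σ = I (the 2×2 identity), κ_1⁺ = κ_1⁻ = κ_2⁻ = 0 and κ_2⁺ = κ > 0, and let Γ = {σσᵀ + σβ + βᵀσᵀ : β ∈ B}. Then sup_{a ∈ Γ} (a_{11} + a_{22} − a_{12} − a_{21}) = 2 + (2κ/3) · Σ_{j=1}^{3} max(v_j^{(1)} − v_j^{(2)}, 0), where v_j^{(1)}, v_j^{(2)} denote the two coordinates of v_j, and the supremum is attained. -/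
open scoped BigOperators
open Matrix

set_option maxHeartbeats 1000000

/-- for `d = 2`, `σ = I`, `κ₁⁺ = κ₁⁻ = κ₂⁻ = 0`, `κ₂⁺ = κ > 0`,
the supremum of `a₁₁ + a₂₂ - a₁₂ - a₂₁` over `a ∈ Γ` equals
`2 + (2κ/3) ∑ⱼ max(vⱼ⁽¹⁾ - vⱼ⁽²⁾, 0)`, and it is attained. -/
theorem sup_gamma_exchange_option (v : Fin 3 → Fin 2 → ℝ)
    (hnorm : ∀ i, ∑ k, v i k ^ 2 = (2 : ℝ))
    (hinner : ∀ i j, i ≠ j → ∑ k, v i k * v j k = -1)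
    (κ : ℝ) (hκ : 0 < κ) :
    IsGreatest
      {x : ℝ | ∃ a ∈ simplexGamma 2 v ![0, κ] ![0, 0] (1 : Matrix (Fin 2) (Fin 2) ℝ),
        x = a 0 0 + a 1 1 - a 0 1 - a 1 0}
      (2 + (2 * κ / 3) * ∑ j, max (v j 0 - v j 1) 0) := by
  -- sums of coordinates vanish
  have h01 := hinner 0 1 (by decide)
  have h02 := hinner 0 2 (by decide)
  have h12 := hinner 1 2 (by decide)
  have hn0 := hnorm 0; have hn1 := hnorm 1; have hn2 := hnorm 2
  simp only [Fin.sum_univ_two] at h01 h02 h12 hn0 hn1 hn2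
  have hsq : (v 0 0 + v 1 0 + v 2 0) ^ 2 + (v 0 1 + v 1 1 + v 2 1) ^ 2 = 0 := by
    nlinarith [hn0, hn1, hn2, h01, h02, h12]
  have hA : v 0 0 + v 1 0 + v 2 0 = 0 := by
    nlinarith [sq_nonneg (v 0 0 + v 1 0 + v 2 0), sq_nonneg (v 0 1 + v 1 1 + v 2 1)]
  have hB : v 0 1 + v 1 1 + v 2 1 = 0 := by
    nlinarith [sq_nonneg (v 0 0 + v 1 0 + v 2 0), sq_nonneg (v 0 1 + v 1 1 + v 2 1)]
  have hmaxswap : ∀ x : ℝ, max x 0 - max (-x) 0 = x := fun x => max_zero_sub_eq_self x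
  have hm0 := hmaxswap (v 0 0 - v 0 1)
  have hm1 := hmaxswap (v 1 0 - v 1 1)
  have hm2 := hmaxswap (v 2 0 - v 2 1)
  rw [neg_sub] at hm0 hm1 hm2
  have hsum : ∑ j, max (v j 0 - v j 1) 0 = ∑ j, max (v j 1 - v j 0) 0 := by
    simp only [Fin.sum_univ_three]; linarith
  rw [hsum]
  constructor
  · -- membership: the maximizer
    set w : Fin 3 → Fin 2 → ℝ :=
      fun j k => if k = 0 then 0 else if v j 0 < v j 1 then κ / 3 else 0 with hw
    set β : Matrix (Fin 2) (Fin 2) ℝ := Matrix.of fun a k => ∑ j, w j k * v j a with hβ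
    refine ⟨(1 : Matrix (Fin 2) (Fin 2) ℝ) * (1 : Matrix (Fin 2) (Fin 2) ℝ)ᵀ
        + 1 * β + βᵀ * (1 : Matrix (Fin 2) (Fin 2) ℝ)ᵀ, ⟨β, ⟨w, ?_, fun a k => rfl⟩, rfl⟩, ?_⟩
    · intro j k
      fin_cases k
      · simp [hw, Set.mem_Icc]
      · simp only [hw, Set.mem_Icc]
        constructor
        · split_ifs <;> positivity
        · split_ifs <;> norm_num <;> linarith
    · simp only [Matrix.transpose_one, Matrix.one_mul, Matrix.mul_one]
      simp only [Matrix.add_apply, Matrix.transpose_apply, Matrix.one_apply_eq,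
        Matrix.one_apply_ne (by decide : (0 : Fin 2) ≠ 1),
        Matrix.one_apply_ne (by decide : (1 : Fin 2) ≠ 0), hβ, Matrix.of_apply]
      have hterm : ∀ j : Fin 3,
          w j 1 * v j 1 - w j 1 * v j 0 = κ / 3 * max (v j 1 - v j 0) 0 := by
        intro j
        simp only [hw, if_neg (by decide : (1 : Fin 2) ≠ 0)]
        rcases lt_or_ge (v j 0) (v j 1) with h | h
        · rw [if_pos h, max_eq_left (by linarith)]; ring
        · rw [if_neg (not_lt.mpr h), max_eq_right (by linarith)]; ring
      have hw0 : ∀ j : Fin 3, w j 0 = 0 := fun j => by simp [hw]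
      simp only [Fin.sum_univ_three, hw0, zero_mul]
      have t0 := hterm 0; have t1 := hterm 1; have t2 := hterm 2
      ring_nf
      ring_nf at t0 t1 t2 ⊢
      linarith
  · -- upper bound
    rintro x ⟨a, ⟨β, ⟨w, hwmem, hβ⟩, ha⟩, hx⟩
    have hw0 : ∀ j : Fin 3, w j 0 = 0 := by
      intro j
      have := hwmem j 0
      simp [Set.mem_Icc] at this
      exact this
    have hw1 : ∀ j : Fin 3, 0 ≤ w j 1 ∧ w j 1 ≤ κ / 3 := by
      intro j
      have := hwmem j 1
      simp [Set.mem_Icc] at this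
      norm_num at this
      exact this
    have hterm : ∀ j : Fin 3, w j 1 * v j 1 - w j 1 * v j 0 ≤ κ / 3 * max (v j 1 - v j 0) 0 := by
      intro j
      obtain ⟨hl, hr⟩ := hw1 j
      rcases le_or_gt (v j 1 - v j 0) 0 with h | h
      · rw [max_eq_right h]
        nlinarith
      · rw [max_eq_left (le_of_lt h)]
        nlinarith
    subst ha hx
    simp only [Matrix.transpose_one, Matrix.one_mul, Matrix.mul_one, Matrix.add_apply,
      Matrix.transpose_apply, Matrix.one_apply_eq,
      Matrix.one_apply_ne (by decide : (0 : Fin 2) ≠ 1),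
      Matrix.one_apply_ne (by decide : (1 : Fin 2) ≠ 0)]
    rw [hβ 0 0, hβ 1 1, hβ 0 1, hβ 1 0]
    simp only [Fin.sum_univ_succ, Fin.sum_univ_zero, Fin.succ_zero_eq_one, Fin.succ_one_eq_two, hw0, zero_mul, add_zero, zero_add]
    have t0 := hterm 0; have t1 := hterm 1; have t2 := hterm 2
    ring_nf at t0 t1 t2 ⊢
    linarith
end

section
/- Let c > 0 and m ∈ ℕ. There exists a constant C = C(c, m) such that for every n ≥ 1, every probability space with a filtration (G_k)_{k=0,…,n}, and every nonnegative martingale (M_k)_{k=0,…,n} with respect to (G_k) satisfying M_0 = 1 and |M_{k+1} − M_k| ≤ (c/√n) M_k almost surely for k = 0, …, n−1, one has E[(max_{0 ≤ k ≤ n} M_k)^{2m}] ≤ C. -/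
/-!
Take `p = 2m + 2` and write `M (k+1) = M k + d` with `|d| ≤ δ M k`, `δ = c / √n`. Expanding
`(M k + d) ^ p` binomially gives `M (k+1) ^ p ≤ (1 + K δ²) M k ^ p + p M k ^ (p-1) d` with `K`
depending only on `c` and `p`, and the last term has mean zero, so
`E[M n ^ p] ≤ (1 + K c² / n) ^ n ≤ exp (K c²)`. As `p` is even, `M ^ p` is a submartingale by
conditional Jensen, and Doob's maximal inequality gives
`P(max_k M k ≥ 2 ^ j) ≤ exp (K c²) 2 ^ (-j p)`. Summing over the dyadic shells
`{2 ^ j ≤ max_k M k < 2 ^ (j+1)}` bounds the `2m`-th moment because `2m < p`.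
-/

open MeasureTheory Finset
open scoped ENNReal

theorem add_pow_le_of_abs_le_mul {p : ℕ} {a y d : ℝ} (ha : 0 ≤ a) (hy : 0 ≤ y)
    (hd : |d| ≤ a * y) :
    (y + d) ^ (p + 2) ≤
      y ^ (p + 2) + (p + 2) * y ^ (p + 1) * d + a ^ 2 * (2 * (1 + a)) ^ (p + 2) * y ^ (p + 2) := by
  have hexpand : (y + d) ^ (p + 2) = y ^ (p + 2) + (p + 2) * y ^ (p + 1) * d +
      ∑ i ∈ range (p + 1), d ^ (i + 2) * y ^ (p - i) * ((p + 2).choose (i + 2) : ℝ) := by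
    rw [add_comm y, add_pow, sum_range_succ', sum_range_succ']
    simp only [zero_add, Nat.choose_one_right, Nat.choose_zero_right, Nat.add_sub_add_right]
    push_cast
    ring
  have hterm : ∀ i ∈ range (p + 1),
      d ^ (i + 2) * y ^ (p - i) * ((p + 2).choose (i + 2) : ℝ) ≤
        a ^ 2 * (1 + a) ^ (p + 2) * y ^ (p + 2) * ((p + 2).choose (i + 2) : ℝ) := by
    intro i hi
    have hip : i ≤ p := Nat.lt_succ_iff.mp (mem_range.mp hi)
    gcongr ?_ * _
    calc d ^ (i + 2) * y ^ (p - i) ≤ (a * y) ^ (i + 2) * y ^ (p - i) := by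
          refine mul_le_mul_of_nonneg_right ?_ (by positivity)
          exact (le_abs_self _).trans
            ((abs_pow d _).trans_le (pow_le_pow_left₀ (abs_nonneg d) hd _))
      _ = a ^ 2 * a ^ i * y ^ (p + 2) := by
          rw [mul_pow, mul_assoc, ← pow_add, show i + 2 + (p - i) = p + 2 by omega]; ring
      _ ≤ a ^ 2 * (1 + a) ^ (p + 2) * y ^ (p + 2) := by
          gcongr
          calc a ^ i ≤ (1 + a) ^ i := by gcongr; linarith
            _ ≤ (1 + a) ^ (p + 2) := pow_le_pow_right₀ (by linarith) (by omega)
  have hchoose : ∑ i ∈ range (p + 1), ((p + 2).choose (i + 2) : ℝ) ≤ 2 ^ (p + 2) := by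
    have h := Nat.sum_range_choose (p + 2)
    rw [sum_range_succ', sum_range_succ'] at h
    simp only [add_assoc, Nat.reduceAdd] at h
    exact_mod_cast (by omega : ∑ i ∈ range (p + 1), (p + 2).choose (i + 2) ≤ 2 ^ (p + 2))
  calc (y + d) ^ (p + 2) ≤ y ^ (p + 2) + (p + 2) * y ^ (p + 1) * d +
        a ^ 2 * (1 + a) ^ (p + 2) * y ^ (p + 2) *
          ∑ i ∈ range (p + 1), ((p + 2).choose (i + 2) : ℝ) := by
        rw [hexpand, mul_sum]
        exact add_le_add_right (sum_le_sum hterm) _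
    _ ≤ _ := by
        rw [mul_pow]
        nlinarith [mul_le_mul_of_nonneg_left hchoose
          (by positivity : 0 ≤ a ^ 2 * (1 + a) ^ (p + 2) * y ^ (p + 2))]

theorem two_pow_mul_div_two_pow_le {q p : ℕ} (hqp : q < p) (A : ℝ≥0∞) (j : ℕ) :
    2 ^ (q * (j + 1)) * (A / 2 ^ (j * p)) ≤ 2 ^ q * A * 2⁻¹ ^ j := by
  have hle : (2⁻¹ : ℝ≥0∞) ^ (j * p) ≤ 2⁻¹ ^ (q * j) * 2⁻¹ ^ j := by
    rw [← pow_add]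
    exact pow_le_pow_right_of_le_one' (by norm_num) (by nlinarith)
  have hcancel : (2 : ℝ≥0∞) ^ (q * j) * 2⁻¹ ^ (q * j) = 1 := by
    rw [← mul_pow, ENNReal.mul_inv_cancel two_ne_zero ENNReal.ofNat_ne_top, one_pow]
  calc 2 ^ (q * (j + 1)) * (A / 2 ^ (j * p)) = 2 ^ q * 2 ^ (q * j) * A * 2⁻¹ ^ (j * p) := by
        rw [div_eq_mul_inv, ENNReal.inv_pow, mul_add, mul_one, pow_add]; ring
    _ ≤ 2 ^ q * 2 ^ (q * j) * A * (2⁻¹ ^ (q * j) * 2⁻¹ ^ j) := by gcongr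
    _ = 2 ^ q * A * 2⁻¹ ^ j * (2 ^ (q * j) * 2⁻¹ ^ (q * j)) := by ring
    _ = 2 ^ q * A * 2⁻¹ ^ j := by rw [hcancel, mul_one]

theorem lintegral_ofReal_pow_le_of_meas_le {Ω : Type*} {m0 : MeasurableSpace Ω}
    {μ : Measure Ω} {S : Ω → ℝ} (hS : Measurable S) (hS_one : ∀ᵐ ω ∂μ, 1 ≤ S ω)
    {q p : ℕ} (hqp : q < p) {A : ℝ≥0∞}
    (htail : ∀ j : ℕ, μ {ω | 2 ^ j ≤ S ω} ≤ A / 2 ^ (j * p)) :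
    ∫⁻ ω, ENNReal.ofReal (S ω ^ q) ∂μ ≤ 2 ^ (q + 1) * A := by
  set E : ℕ → Set Ω := fun j => {ω | 2 ^ j ≤ S ω}
  have hE : ∀ j, MeasurableSet (E j) := fun j => measurableSet_le measurable_const hS
  set F : ℕ → Ω → ℝ≥0∞ := fun j => (E j).indicator fun _ => 2 ^ (q * (j + 1))
  have hdyadic : ∀ᵐ ω ∂μ, ENNReal.ofReal (S ω ^ q) ≤ ∑' j, F j ω := by
    filter_upwards [hS_one] with ω hω
    obtain ⟨j, hjS, hSj⟩ := exists_nat_pow_near hω one_lt_two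
    refine le_trans ?_ (ENNReal.le_tsum j)
    rw [show F j ω = 2 ^ (q * (j + 1)) from Set.indicator_of_mem (show ω ∈ E j from hjS) _,
      pow_mul', ← ENNReal.ofReal_ofNat 2,
      ← ENNReal.ofReal_pow zero_le_two, ← ENNReal.ofReal_pow (by positivity)]
    exact ENNReal.ofReal_le_ofReal (pow_le_pow_left₀ (by linarith) hSj.le q)
  calc ∫⁻ ω, ENNReal.ofReal (S ω ^ q) ∂μ
      ≤ ∫⁻ ω, ∑' j, F j ω ∂μ := lintegral_mono_ae hdyadic
    _ = ∑' j : ℕ, 2 ^ (q * (j + 1)) * μ (E j) := by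
        rw [lintegral_tsum fun j => (measurable_const.indicator (hE j)).aemeasurable]
        simp_rw [lintegral_indicator (hE _), setLIntegral_const]
    _ ≤ ∑' j : ℕ, 2 ^ q * A * 2⁻¹ ^ j :=
        ENNReal.tsum_le_tsum fun j =>
          (mul_le_mul_right (htail j) _).trans (two_pow_mul_div_two_pow_le hqp A j)
    _ = 2 ^ (q + 1) * A := by
        rw [ENNReal.tsum_mul_left, ENNReal.tsum_geometric, ENNReal.one_sub_inv_two, inv_inv,
          pow_succ]
        ring

namespace MeasureTheory

variable {Ω : Type*} {m0 : MeasurableSpace Ω} {μ : Measure Ω}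

-- Mathlib's martingales live on all of `ℕ`: freeze the filtration (and the process) at time `n`.
def Filtration.truncate (G : ℕ → MeasurableSpace Ω) (hmono : Monotone G)
    (hle : ∀ k, G k ≤ m0) (n : ℕ) : Filtration ℕ m0 :=
  ⟨fun k => G (min k n), fun _ _ hij => hmono (min_le_min_right n hij), fun _ => hle _⟩

theorem martingale_min_of_condExp_succ [IsFiniteMeasure μ] {G : ℕ → MeasurableSpace Ω}
    (hmono : Monotone G) (hle : ∀ k, G k ≤ m0) {M : ℕ → Ω → ℝ} {n : ℕ}
    (hmeas : ∀ k ≤ n, StronglyMeasurable[G k] (M k)) (hint : ∀ k ≤ n, Integrable (M k) μ)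
    (hmart : ∀ k < n, μ[M (k + 1) | G k] =ᵐ[μ] M k) :
    Martingale (fun k => M (min k n)) (Filtration.truncate G hmono hle n) μ := by
  refine martingale_nat (fun k => hmeas _ (min_le_right k n)) (fun k => hint _ (min_le_right k n))
    fun k => ?_
  change M (min k n) =ᵐ[μ] μ[M (min (k + 1) n) | G (min k n)]
  rcases lt_or_ge k n with hk | hk
  · rw [min_eq_left hk.le, min_eq_left hk]
    exact (hmart k hk).symm
  · rw [min_eq_right hk, min_eq_right (hk.trans k.le_succ),
      condExp_of_stronglyMeasurable (hle n) (hmeas n le_rfl) (hint n le_rfl)]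

theorem ae_abs_le_one_add_pow {M : ℕ → Ω → ℝ} {n : ℕ} {δ : ℝ} (hδ : 0 ≤ δ)
    (hM0 : ∀ᵐ ω ∂μ, M 0 ω = 1)
    (hstep : ∀ k < n, ∀ᵐ ω ∂μ, |M (k + 1) ω - M k ω| ≤ δ * M k ω) :
    ∀ k ≤ n, ∀ᵐ ω ∂μ, |M k ω| ≤ (1 + δ) ^ k := by
  intro k hk
  induction k with
  | zero => filter_upwards [hM0] with ω hω using by simp [hω]
  | succ k ih =>
    filter_upwards [ih (by omega), hstep k hk] with ω hbound hω
    calc |M (k + 1) ω| ≤ (1 + δ) * |M k ω| := by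
          linarith [abs_sub_abs_le_abs_sub (M (k + 1) ω) (M k ω),
            mul_le_mul_of_nonneg_left (le_abs_self (M k ω)) hδ]
      _ ≤ (1 + δ) * (1 + δ) ^ k := by gcongr
      _ = (1 + δ) ^ (k + 1) := by ring

theorem ae_norm_pow_le_of_ae_abs_le {f : Ω → ℝ} {B : ℝ} (hB : ∀ᵐ ω ∂μ, |f ω| ≤ B)
    (p : ℕ) : ∀ᵐ ω ∂μ, ‖f ω ^ p‖ ≤ B ^ p := by
  filter_upwards [hB] with ω hω
  rw [Real.norm_eq_abs, abs_pow]
  exact pow_le_pow_left₀ (abs_nonneg _) hω p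

section Martingale

variable [IsFiniteMeasure μ] {𝓕 : Filtration ℕ m0} {M : ℕ → Ω → ℝ}

theorem Martingale.integrable_pow (hM : Martingale M 𝓕 μ)
    (hbdd : ∀ k, ∃ B, ∀ᵐ ω ∂μ, |M k ω| ≤ B) (k p : ℕ) :
    Integrable (fun ω => M k ω ^ p) μ :=
  (hbdd k).elim fun B hB => .of_bound ((hM.integrable k).aestronglyMeasurable.pow p) (B ^ p)
    (ae_norm_pow_le_of_ae_abs_le hB p)

theorem Martingale.integral_mul_sub_eq_zero (hM : Martingale M 𝓕 μ) {k : ℕ} {f : Ω → ℝ}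
    (hf : StronglyMeasurable[𝓕 k] f) (hint : Integrable (f * (M (k + 1) - M k)) μ) :
    ∫ ω, f ω * (M (k + 1) ω - M k ω) ∂μ = 0 := by
  have hincr : μ[M (k + 1) - M k | 𝓕 k] =ᵐ[μ] 0 := by
    filter_upwards [condExp_sub (hM.integrable (k + 1)) (hM.integrable k) (𝓕 k),
      hM.condExp_ae_eq k.le_succ] with ω hsub hmart
    rw [hsub, Pi.sub_apply, hmart, condExp_of_stronglyMeasurable (𝓕.le k) (hM.stronglyAdapted k)
      (hM.integrable k), sub_self, Pi.zero_apply]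
  calc ∫ ω, f ω * (M (k + 1) ω - M k ω) ∂μ
        = ∫ ω, μ[f * (M (k + 1) - M k) | 𝓕 k] ω ∂μ :=
        (integral_condExp (𝓕.le k)).symm
    _ = ∫ ω, (f * μ[M (k + 1) - M k | 𝓕 k]) ω ∂μ :=
        integral_congr_ae (condExp_mul_of_stronglyMeasurable_left hf hint
          ((hM.integrable _).sub (hM.integrable _)))
    _ = 0 := by
        rw [integral_congr_ae (hincr.mul_left (f₃ := f))]
        simp

theorem Martingale.submartingale_pow (hM : Martingale M 𝓕 μ) {p : ℕ} (hp : Even p)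
    (hint : ∀ k, Integrable (fun ω => M k ω ^ p) μ) :
    Submartingale (fun k ω => M k ω ^ p) 𝓕 μ := by
  refine submartingale_nat (fun k => (hM.stronglyAdapted k).pow p) hint fun k => ?_
  have hjensen := hp.convexOn_pow.map_condExp_le_univ (𝓕.le k)
    (continuous_pow p).lowerSemicontinuous (hM.integrable (k + 1)) (hint (k + 1))
  filter_upwards [hM.condExp_ae_eq k.le_succ, hjensen] with ω hmart hω
  simp only [Function.comp_apply, hmart] at hω
  exact hω

theorem Martingale.integral_pow_succ_le (hM : Martingale M 𝓕 μ)
    (hbdd : ∀ k, ∃ B, ∀ᵐ ω ∂μ, |M k ω| ≤ B) {k p : ℕ} {δ : ℝ} (hδ : 0 ≤ δ)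
    (hnonneg : ∀ᵐ ω ∂μ, 0 ≤ M k ω)
    (hstep : ∀ᵐ ω ∂μ, |M (k + 1) ω - M k ω| ≤ δ * M k ω) :
    ∫ ω, M (k + 1) ω ^ (p + 2) ∂μ ≤
      (1 + δ ^ 2 * (2 * (1 + δ)) ^ (p + 2)) * ∫ ω, M k ω ^ (p + 2) ∂μ := by
  have hint_pow := hM.integrable_pow hbdd
  have hint_cross : Integrable (fun ω => M k ω ^ (p + 1) * (M (k + 1) ω - M k ω)) μ := by
    obtain ⟨B, hB⟩ := hbdd k
    exact ((hM.integrable _).sub (hM.integrable _)).bdd_mul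
      ((hM.integrable k).aestronglyMeasurable.pow _) (ae_norm_pow_le_of_ae_abs_le hB _)
  have hcross : ∫ ω, M k ω ^ (p + 1) * (M (k + 1) ω - M k ω) ∂μ = 0 :=
    hM.integral_mul_sub_eq_zero ((hM.stronglyAdapted k).pow _) hint_cross
  have hpointwise : (fun ω => M (k + 1) ω ^ (p + 2)) ≤ᵐ[μ] fun ω =>
      (1 + δ ^ 2 * (2 * (1 + δ)) ^ (p + 2)) * M k ω ^ (p + 2) +
        (p + 2) * (M k ω ^ (p + 1) * (M (k + 1) ω - M k ω)) := by
    filter_upwards [hnonneg, hstep] with ω hy hd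
    have := add_pow_le_of_abs_le_mul (p := p) hδ hy hd
    rw [add_sub_cancel] at this
    linarith
  calc ∫ ω, M (k + 1) ω ^ (p + 2) ∂μ
        ≤ ∫ ω, (1 + δ ^ 2 * (2 * (1 + δ)) ^ (p + 2)) * M k ω ^ (p + 2) +
          (p + 2) * (M k ω ^ (p + 1) * (M (k + 1) ω - M k ω)) ∂μ :=
        integral_mono_ae (hint_pow _ _) (((hint_pow _ _).const_mul _).add (hint_cross.const_mul _))
          hpointwise
    _ = _ := by
        rw [integral_add ((hint_pow _ _).const_mul _) (hint_cross.const_mul _), integral_const_mul,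
          integral_const_mul, hcross, mul_zero, add_zero]

theorem Martingale.integral_pow_le (hM : Martingale M 𝓕 μ)
    (hbdd : ∀ k, ∃ B, ∀ᵐ ω ∂μ, |M k ω| ≤ B) {n p : ℕ} {δ : ℝ} (hδ : 0 ≤ δ)
    (hnonneg : ∀ k < n, ∀ᵐ ω ∂μ, 0 ≤ M k ω)
    (hstep : ∀ k < n, ∀ᵐ ω ∂μ, |M (k + 1) ω - M k ω| ≤ δ * M k ω) :
    ∫ ω, M n ω ^ (p + 2) ∂μ ≤
      (1 + δ ^ 2 * (2 * (1 + δ)) ^ (p + 2)) ^ n * ∫ ω, M 0 ω ^ (p + 2) ∂μ := by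
  induction n with
  | zero => simp
  | succ n ih =>
    calc ∫ ω, M (n + 1) ω ^ (p + 2) ∂μ
        ≤ (1 + δ ^ 2 * (2 * (1 + δ)) ^ (p + 2)) * ∫ ω, M n ω ^ (p + 2) ∂μ :=
          hM.integral_pow_succ_le hbdd hδ (hnonneg n n.lt_succ_self) (hstep n n.lt_succ_self)
      _ ≤ (1 + δ ^ 2 * (2 * (1 + δ)) ^ (p + 2)) *
          ((1 + δ ^ 2 * (2 * (1 + δ)) ^ (p + 2)) ^ n * ∫ ω, M 0 ω ^ (p + 2) ∂μ) := by
          gcongr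
          exact ih (fun k hk => hnonneg k (by omega)) (fun k hk => hstep k (by omega))
      _ = _ := by ring

theorem Martingale.meas_le_sup'_le (hM : Martingale M 𝓕 μ) {p : ℕ} (hp : Even p)
    (hint : ∀ k, Integrable (fun ω => M k ω ^ p) μ) {t : ℝ} (ht : 0 < t) (n : ℕ) :
    μ {ω | t ≤ (range (n + 1)).sup' nonempty_range_add_one fun k => M k ω} ≤
      ENNReal.ofReal (∫ ω, M n ω ^ p ∂μ) / ENNReal.ofReal (t ^ p) := by
  set N : ℕ → Ω → ℝ := fun k ω => M k ω ^ p
  set ε := (t ^ p).toNNReal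
  have hN_nonneg : 0 ≤ N := fun k ω => hp.pow_nonneg _
  have hsub : {ω | t ≤ (range (n + 1)).sup' nonempty_range_add_one fun k => M k ω} ⊆
      {ω | (ε : ℝ) ≤ (range (n + 1)).sup' nonempty_range_add_one fun k => N k ω} := by
    intro ω hω
    obtain ⟨k, hk, hmax⟩ := exists_mem_eq_sup' nonempty_range_add_one fun k => M k ω
    rw [Set.mem_ofPred_eq, hmax] at hω
    rw [Set.mem_ofPred_eq, Real.coe_toNNReal _ (pow_nonneg ht.le p)]
    exact (pow_le_pow_left₀ ht.le hω p).trans (le_sup' (fun k => N k ω) hk)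
  rw [ENNReal.le_div_iff_mul_le (.inl (by positivity)) (.inl ENNReal.ofReal_ne_top), mul_comm]
  calc ENNReal.ofReal (t ^ p) *
        μ {ω | t ≤ (range (n + 1)).sup' nonempty_range_add_one fun k => M k ω}
      ≤ ε * μ {ω | (ε : ℝ) ≤
          (range (n + 1)).sup' nonempty_range_add_one fun k => N k ω} :=
        mul_le_mul_right (measure_mono hsub) _
    _ ≤ ENNReal.ofReal (∫ ω in _, N n ω ∂μ) :=
        maximal_ineq (hM.submartingale_pow hp hint) hN_nonneg n
    _ ≤ _ := ENNReal.ofReal_le_ofReal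
        (setIntegral_le_integral (hint n) (.of_forall (hN_nonneg n)))

end Martingale

theorem Martingale.integral_pow_le_exp [IsProbabilityMeasure μ] {𝓕 : Filtration ℕ m0}
    {M : ℕ → Ω → ℝ} (hM : Martingale M 𝓕 μ)
    (hbdd : ∀ k, ∃ B, ∀ᵐ ω ∂μ, |M k ω| ≤ B)
    {n p : ℕ} (hn : 1 ≤ n) {c : ℝ} (hc : 0 ≤ c) (hM0 : ∀ᵐ ω ∂μ, M 0 ω = 1)
    (hnonneg : ∀ k < n, ∀ᵐ ω ∂μ, 0 ≤ M k ω)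
    (hstep : ∀ k < n, ∀ᵐ ω ∂μ, |M (k + 1) ω - M k ω| ≤ c / Real.sqrt n * M k ω) :
    ∫ ω, M n ω ^ (p + 2) ∂μ ≤ Real.exp (c ^ 2 * (2 * (1 + c)) ^ (p + 2)) := by
  set δ := c / Real.sqrt n
  have hδ : 0 ≤ δ := by positivity
  have hδc : δ ≤ c := div_le_self hc (Real.one_le_sqrt.mpr (by exact_mod_cast hn))
  have hnδ : n * δ ^ 2 = c ^ 2 := by
    have : (n : ℝ) ≠ 0 := by positivity
    rw [div_pow, Real.sq_sqrt (Nat.cast_nonneg n)]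
    field_simp
  have hM0_pow : ∫ ω, M 0 ω ^ (p + 2) ∂μ = 1 := by
    rw [integral_congr_ae (hM0.mono fun ω hω => show M 0 ω ^ (p + 2) = 1 by simp [hω])]
    simp
  calc ∫ ω, M n ω ^ (p + 2) ∂μ
      ≤ (1 + δ ^ 2 * (2 * (1 + δ)) ^ (p + 2)) ^ n * ∫ ω, M 0 ω ^ (p + 2) ∂μ :=
        hM.integral_pow_le hbdd hδ hnonneg hstep
    _ ≤ Real.exp (δ ^ 2 * (2 * (1 + δ)) ^ (p + 2)) ^ n := by
        rw [hM0_pow, mul_one]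
        gcongr
        linarith [Real.add_one_le_exp (δ ^ 2 * (2 * (1 + δ)) ^ (p + 2))]
    _ = Real.exp (n * δ ^ 2 * (2 * (1 + δ)) ^ (p + 2)) := by rw [← Real.exp_nat_mul, mul_assoc]
    _ ≤ Real.exp (c ^ 2 * (2 * (1 + c)) ^ (p + 2)) := by rw [hnδ]; gcongr

end MeasureTheory

/-- a uniform moment bound for the running maximum of nonnegative
discrete-time martingales with relative step size `c/√n` (cf. (4.23) in Kusuoka). -/
theorem martingale_max_moment_bound (c : ℝ) (hc : 0 < c) (m : ℕ) :
    ∃ C : ℝ, ∀ n : ℕ, 1 ≤ n →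
      ∀ (Ω : Type) (m0 : MeasurableSpace Ω) (μ : Measure Ω),
        IsProbabilityMeasure μ →
        ∀ G : ℕ → MeasurableSpace Ω, (∀ k, G k ≤ m0) → Monotone G →
        ∀ M : ℕ → Ω → ℝ,
          (∀ k ≤ n, StronglyMeasurable[G k] (M k)) →
          (∀ k ≤ n, Integrable (M k) μ) →
          (∀ k < n, μ[M (k + 1) | G k] =ᵐ[μ] M k) →
          (∀ᵐ ω ∂μ, M 0 ω = 1) →
          (∀ k ≤ n, ∀ᵐ ω ∂μ, 0 ≤ M k ω) →
          (∀ k < n, ∀ᵐ ω ∂μ, |M (k + 1) ω - M k ω| ≤ c / Real.sqrt n * M k ω) →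
          ∫⁻ ω, ENNReal.ofReal
              (((Finset.range (n + 1)).sup' Finset.nonempty_range_add_one
                  fun k => M k ω) ^ (2 * m)) ∂μ
            ≤ ENNReal.ofReal C := by
  set K := Real.exp (c ^ 2 * (2 * (1 + c)) ^ (2 * m + 2))
  refine ⟨2 ^ (2 * m + 1) * K, ?_⟩
  intro n hn Ω m0 μ _ G hle hmono M hmeas hint hmart hM0 hnonneg hstep
  set S := fun ω => (range (n + 1)).sup' nonempty_range_add_one fun k => M k ω
  have hM := martingale_min_of_condExp_succ hmono hle hmeas hint hmart
  have hbdd : ∀ k, ∃ B, ∀ᵐ ω ∂μ, |M (min k n) ω| ≤ B := fun k =>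
    ⟨_, ae_abs_le_one_add_pow (by positivity) hM0 hstep _ (min_le_right k n)⟩
  have hmoment : ∫ ω, M (min n n) ω ^ (2 * m + 2) ∂μ ≤ K :=
    hM.integral_pow_le_exp hbdd hn hc.le hM0
      (fun k hk => by simpa [min_eq_left hk.le] using hnonneg k hk.le)
      (fun k hk => by
        simpa [min_eq_left hk.le, min_eq_left (Nat.succ_le_of_lt hk)] using hstep k hk)
  have htail (j : ℕ) : μ {ω | 2 ^ j ≤ S ω} ≤ ENNReal.ofReal K / 2 ^ (j * (2 * m + 2)) := by
    have hS : S = fun ω => (range (n + 1)).sup' nonempty_range_add_one fun k => M (min k n) ω :=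
      funext fun ω => sup'_congr _ rfl fun k hk => by rw [min_eq_left (mem_range_succ_iff.mp hk)]
    rw [hS, ← ENNReal.ofReal_ofNat 2, ← ENNReal.ofReal_pow zero_le_two, pow_mul]
    exact (hM.meas_le_sup'_le ⟨m + 1, by ring⟩ (hM.integrable_pow hbdd · _) (by positivity) n
      ).trans (ENNReal.div_le_div_right (ENNReal.ofReal_le_ofReal hmoment) _)
  have hS_meas : Measurable S :=
    measurable_range_sup'' fun k hk => (hmeas k hk).measurable.mono (hle k) le_rfl
  have hS_one : ∀ᵐ ω ∂μ, 1 ≤ S ω :=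
    hM0.mono fun ω hω => hω ▸ le_sup' (fun k => M k ω) (mem_range.mpr n.succ_pos)
  calc _ ≤ 2 ^ (2 * m + 1) * ENNReal.ofReal K :=
        lintegral_ofReal_pow_le_of_meas_le hS_meas hS_one (by omega) htail
    _ = _ := by
        rw [ENNReal.ofReal_mul (by positivity), ENNReal.ofReal_pow zero_le_two,
          ENNReal.ofReal_ofNat]
end

section
/- Let c > 0 and m ∈ ℕ. There exists a constant C = C(c, m) such that for every n > c², every probability space with a filtration (G_k)_{k=0,…,n}, and every strictly positive martingale (M_k)_{k=0,…,n} with respect to (G_k) satisfying M_0 = 1 and |M_{k+1} − M_k| ≤ (c/√n) M_k almost surely for k = 0, …, n−1, one has E[(max_{0 ≤ k ≤ n} |ln M_k|)^{2m}] ≤ C. -/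
/-!
Since `|log x| ^ p ≲ √x + √x⁻¹`, it suffices to bound `E √(max_k M_k)` and `E √(max_k M_k⁻¹)`.
Both `M` and `M⁻¹` are nonnegative submartingales (the latter by convexity of `x ↦ x⁻¹`), so
Doob's maximal inequality gives tails `P(max ≥ t) ≤ E[X_n] / t`, which integrate to
`E √max ≤ 2 √E[X_n]`. Here `E M_n = 1`, while the step bound gives, with `δ = c / √n`,
`E[M_{k+1}⁻¹ | G_k] ≤ (1 + δ² / (1 - δ)) M_k⁻¹`, hence `E M_n⁻¹ ≤ exp (c² / (1 - δ))`; this is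
uniform in `n > c²` because then `δ ≤ c / √(⌊c²⌋ + 1) < 1`. To have `M⁻¹` bounded, `M` is replaced
by the a.s. equal process `max (M_k) ((1 - δ) ^ k)`.
-/

open MeasureTheory Real Set Finset

lemma two_mul_inv_sub_inv_sq_mul_le_inv {x y : ℝ} (hx : 0 < x) (hy : 0 < y) :
    2 * x⁻¹ - x⁻¹ ^ 2 * y ≤ y⁻¹ := by
  have : y⁻¹ - (2 * x⁻¹ - x⁻¹ ^ 2 * y) = (x - y) ^ 2 / (x ^ 2 * y) := by
    field_simp
    ring
  rw [← sub_nonneg, this]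
  positivity

lemma inv_le_of_abs_sub_le_mul {δ x y : ℝ} (hδ : δ < 1) (hx : 0 < x) (h : |y - x| ≤ δ * x) :
    y⁻¹ ≤ (2 + δ ^ 2 / (1 - δ)) * x⁻¹ - x⁻¹ ^ 2 * y := by
  have hy : (1 - δ) * x ≤ y := by linarith [(abs_le.mp h).1]
  have hy₀ : 0 < y := lt_of_lt_of_le (mul_pos (by linarith) hx) hy
  have hsq : (x - y) ^ 2 ≤ δ ^ 2 * x ^ 2 := by
    rw [← mul_pow, ← sq_abs, abs_sub_comm]
    gcongr
  have key : (1 - δ) * (x - y) ^ 2 ≤ δ ^ 2 * (x * y) := by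
    nlinarith [mul_le_mul_of_nonneg_left hy (by positivity : 0 ≤ δ ^ 2 * x)]
  have : (2 + δ ^ 2 / (1 - δ)) * x⁻¹ - x⁻¹ ^ 2 * y - y⁻¹ =
      (δ ^ 2 * (x * y) - (1 - δ) * (x - y) ^ 2) / ((1 - δ) * (x ^ 2 * y)) := by
    have : 1 - δ ≠ 0 := by linarith
    field_simp
    ring
  rw [← sub_nonneg, this]
  exact div_nonneg (by linarith) (mul_nonneg (by linarith) (by positivity))

lemma norm_inv_pow_le_of_le {b x : ℝ} (hb : 0 < b) (h : b ≤ x) (n : ℕ) :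
    ‖x⁻¹ ^ n‖ ≤ b⁻¹ ^ n := by
  have hx : 0 < x := hb.trans_le h
  rw [norm_pow, norm_inv, Real.norm_of_nonneg hx.le]
  gcongr

lemma log_pow_le_mul_sqrt (p : ℕ) {z : ℝ} (hz : 1 ≤ z) : log z ^ p ≤ (2 * p) ^ p * √z := by
  rcases Nat.eq_zero_or_pos p with rfl | hp
  · simpa using Real.one_le_sqrt.mpr hz
  have hε : 0 < (2 * (p : ℝ))⁻¹ := by positivity
  calc log z ^ p ≤ (z ^ (2 * p : ℝ)⁻¹ / (2 * p : ℝ)⁻¹) ^ p :=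
        pow_le_pow_left₀ (log_nonneg hz) (log_le_rpow_div (by linarith) hε) p
    _ = (2 * p) ^ p * √z := by
        rw [div_inv_eq_mul, mul_comm, mul_pow, ← rpow_natCast (z ^ _), ← rpow_mul (by linarith),
          sqrt_eq_rpow]
        congr 2
        field_simp

lemma abs_log_pow_le (p : ℕ) {x : ℝ} (hx : 0 < x) :
    |log x| ^ p ≤ (2 * p) ^ p * (√x + √x⁻¹) := by
  have hA : (0 : ℝ) ≤ (2 * p) ^ p := by positivity
  rcases le_total 1 x with h | h
  · rw [abs_of_nonneg (log_nonneg h)]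
    nlinarith [log_pow_le_mul_sqrt p h, sqrt_nonneg x⁻¹]
  · rw [abs_of_nonpos (log_nonpos hx.le h), ← log_inv]
    nlinarith [log_pow_le_mul_sqrt p (one_le_inv₀ hx |>.mpr h), sqrt_nonneg x]

lemma setLIntegral_Ioi_ofReal_mul_rpow_neg_two {b : ℝ} (hb : 0 < b) :
    ∫⁻ t in Ioi b, ENNReal.ofReal (b ^ 2 * t ^ (-2 : ℝ)) = ENNReal.ofReal b := by
  rw [← ofReal_integral_eq_lintegral_ofReal
    ((integrableOn_Ioi_rpow_of_lt (by norm_num) hb).const_mul _)]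
  · rw [integral_const_mul, integral_Ioi_rpow_of_lt (by norm_num) hb]
    congr 1
    norm_num [rpow_neg_one]
    field_simp
  · filter_upwards [ae_restrict_mem measurableSet_Ioi] with t ht
    have : 0 < t := hb.trans ht
    positivity

lemma lintegral_sqrt_le_of_meas_le {Ω : Type*} [MeasurableSpace Ω] {μ : Measure Ω}
    [IsProbabilityMeasure μ] {X : Ω → ℝ} (hX : AEMeasurable X μ) {K : ℝ} (hK : 0 < K)
    (htail : ∀ t, 0 < t → μ {ω | t ≤ X ω} ≤ ENNReal.ofReal (K / t)) :
    ∫⁻ ω, ENNReal.ofReal √(X ω) ∂μ ≤ ENNReal.ofReal (2 * √K) := by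
  set b := √K
  have hb : 0 < b := sqrt_pos.mpr hK
  rw [lintegral_eq_lintegral_meas_lt μ (ae_of_all _ fun ω => sqrt_nonneg _)
    (continuous_sqrt.measurable.comp_aemeasurable hX),
    ← Ioc_union_Ioi_eq_Ioi hb.le, lintegral_union measurableSet_Ioi (Ioc_disjoint_Ioi le_rfl),
    two_mul, ENNReal.ofReal_add hb.le hb.le]
  gcongr
  · calc ∫⁻ t in Ioc 0 b, μ {ω | t < √(X ω)} ≤ ∫⁻ _ in Ioc 0 b, 1 :=
          lintegral_mono fun _ => prob_le_one
      _ = ENNReal.ofReal b := by simp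
  · rw [← setLIntegral_Ioi_ofReal_mul_rpow_neg_two hb]
    refine setLIntegral_mono' measurableSet_Ioi fun t ht => ?_
    have ht0 : 0 < t := hb.trans ht
    calc μ {ω | t < √(X ω)} ≤ μ {ω | t ^ 2 ≤ X ω} :=
          measure_mono fun ω hω => ((lt_sqrt ht0.le).mp hω).le
      _ ≤ ENNReal.ofReal (K / t ^ 2) := htail _ (by positivity)
      _ = ENNReal.ofReal (b ^ 2 * t ^ (-2 : ℝ)) := by
          rw [sq_sqrt hK.le, rpow_neg ht0.le, div_eq_mul_inv]
          norm_cast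

lemma MeasureTheory.StronglyAdapted.measurable_sup' {Ω : Type*} {m0 : MeasurableSpace Ω}
    {ℱ : Filtration ℕ m0} {f : ℕ → Ω → ℝ} (hf : StronglyAdapted ℱ f) (n : ℕ) :
    Measurable fun ω => (range (n + 1)).sup' nonempty_range_add_one fun k => f k ω :=
  Finset.measurable_range_sup'' fun k _ => (hf k).measurable.mono (ℱ.le k) le_rfl

lemma MeasureTheory.Submartingale.meas_le_sup'_le {Ω : Type*} {m0 : MeasurableSpace Ω}
    {μ : Measure Ω} [IsFiniteMeasure μ] {ℱ : Filtration ℕ m0} {f : ℕ → Ω → ℝ}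
    (hf : Submartingale f ℱ μ) (hpos : 0 ≤ f) (n : ℕ) {t : ℝ} (ht : 0 < t) :
    μ {ω | t ≤ (range (n + 1)).sup' nonempty_range_add_one fun k => f k ω}
      ≤ ENNReal.ofReal ((∫ ω, f n ω ∂μ) / t) := by
  have h := maximal_ineq hf hpos (ε := t.toNNReal) n
  rw [Real.coe_toNNReal t ht.le] at h
  rw [ENNReal.ofReal_div_of_pos ht, ENNReal.le_div_iff_mul_le (by simp [ht]) (by simp), mul_comm]
  refine h.trans (ENNReal.ofReal_le_ofReal ?_)
  exact setIntegral_le_integral (hf.integrable n) (ae_of_all _ fun ω => hpos n ω)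

lemma MeasureTheory.Submartingale.lintegral_sqrt_sup'_le {Ω : Type*} {m0 : MeasurableSpace Ω}
    {μ : Measure Ω} [IsProbabilityMeasure μ] {ℱ : Filtration ℕ m0} {f : ℕ → Ω → ℝ}
    (hf : Submartingale f ℱ μ) (hpos : 0 ≤ f) (n : ℕ) {K : ℝ} (hK : 0 < K)
    (hfn : ∫ ω, f n ω ∂μ ≤ K) :
    ∫⁻ ω, ENNReal.ofReal √((range (n + 1)).sup' nonempty_range_add_one fun k => f k ω) ∂μ
      ≤ ENNReal.ofReal (2 * √K) := by
  refine lintegral_sqrt_le_of_meas_le ?_ hK fun t ht =>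
    (hf.meas_le_sup'_le hpos n ht).trans (ENNReal.ofReal_le_ofReal (by gcongr))
  exact (hf.stronglyAdapted.measurable_sup' n).aemeasurable

namespace MeasureTheory.Martingale

variable {Ω : Type*} {m0 : MeasurableSpace Ω} {μ : Measure Ω}
  {ℱ : Filtration ℕ m0} {P : ℕ → Ω → ℝ} {b : ℝ}

lemma stronglyMeasurable_inv (hP : Martingale P ℱ μ) (k : ℕ) :
    StronglyMeasurable[ℱ k] fun ω => (P k ω)⁻¹ :=
  (hP.stronglyAdapted k).measurable.inv.stronglyMeasurable

lemma integrable_inv [IsFiniteMeasure μ] (hP : Martingale P ℱ μ) (hb : 0 < b)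
    (hPb : ∀ k ω, b ≤ P k ω) (k : ℕ) : Integrable (fun ω => (P k ω)⁻¹) μ :=
  .of_bound ((hP.stronglyMeasurable_inv k).mono (ℱ.le k)).aestronglyMeasurable b⁻¹ <|
    ae_of_all _ fun ω => by simpa using norm_inv_pow_le_of_le hb (hPb k ω) 1

lemma integrable_inv_sq_mul_succ [IsFiniteMeasure μ] (hP : Martingale P ℱ μ) (hb : 0 < b)
    (hPb : ∀ k ω, b ≤ P k ω) (k : ℕ) : Integrable (fun ω => (P k ω)⁻¹ ^ 2 * P (k + 1) ω) μ :=
  (hP.integrable (k + 1)).bdd_mul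
    (((hP.stronglyMeasurable_inv k).pow 2).mono (ℱ.le k)).aestronglyMeasurable (c := b⁻¹ ^ 2)
    (ae_of_all _ fun ω => norm_inv_pow_le_of_le hb (hPb k ω) 2)

lemma condExp_inv_sq_mul_succ [IsFiniteMeasure μ] (hP : Martingale P ℱ μ) (hb : 0 < b)
    (hPb : ∀ k ω, b ≤ P k ω) (k : ℕ) :
    μ[fun ω => (P k ω)⁻¹ ^ 2 * P (k + 1) ω | ℱ k] =ᵐ[μ] fun ω => (P k ω)⁻¹ := by
  have hpull : μ[fun ω => (P k ω)⁻¹ ^ 2 * P (k + 1) ω | ℱ k]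
      =ᵐ[μ] fun ω => (P k ω)⁻¹ ^ 2 * μ[P (k + 1) | ℱ k] ω :=
    condExp_stronglyMeasurable_mul_of_bound (ℱ.le k) ((hP.stronglyMeasurable_inv k).pow 2)
      (hP.integrable (k + 1)) (b⁻¹ ^ 2)
      (ae_of_all _ fun ω => norm_inv_pow_le_of_le hb (hPb k ω) 2)
  filter_upwards [hpull, hP.condExp_ae_eq k.le_succ] with ω hpull hmart
  have : P k ω ≠ 0 := (hb.trans_le (hPb k ω)).ne'
  rw [hpull, hmart]
  field_simp

lemma integral_inv_sq_mul_succ [IsFiniteMeasure μ] (hP : Martingale P ℱ μ) (hb : 0 < b)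
    (hPb : ∀ k ω, b ≤ P k ω) (k : ℕ) :
    ∫ ω, (P k ω)⁻¹ ^ 2 * P (k + 1) ω ∂μ = ∫ ω, (P k ω)⁻¹ ∂μ :=
  (integral_condExp (ℱ.le k)).symm.trans <|
    integral_congr_ae (hP.condExp_inv_sq_mul_succ hb hPb k)

lemma submartingale_inv [IsFiniteMeasure μ] (hP : Martingale P ℱ μ) (hb : 0 < b)
    (hPb : ∀ k ω, b ≤ P k ω) : Submartingale (fun k ω => (P k ω)⁻¹) ℱ μ := by
  have hpos : ∀ k ω, 0 < P k ω := fun k ω => hb.trans_le (hPb k ω)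
  refine submartingale_nat hP.stronglyMeasurable_inv (hP.integrable_inv hb hPb) fun k => ?_
  have htangent := condExp_mono (m := ℱ k)
    (((hP.integrable_inv hb hPb k).const_mul 2).sub (hP.integrable_inv_sq_mul_succ hb hPb k))
    (hP.integrable_inv hb hPb (k + 1))
    (ae_of_all _ fun ω => two_mul_inv_sub_inv_sq_mul_le_inv (hpos k ω) (hpos (k + 1) ω))
  have hconst : μ[fun ω => 2 * (P k ω)⁻¹ | ℱ k] = fun ω => 2 * (P k ω)⁻¹ :=
    condExp_of_stronglyMeasurable (ℱ.le k) ((hP.stronglyMeasurable_inv k).const_mul 2)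
      ((hP.integrable_inv hb hPb k).const_mul 2)
  filter_upwards [htangent, condExp_sub ((hP.integrable_inv hb hPb k).const_mul 2)
    (hP.integrable_inv_sq_mul_succ hb hPb k) (ℱ k), hP.condExp_inv_sq_mul_succ hb hPb k]
    with ω htangent hsub hpull
  simp only [Pi.sub_apply, hconst] at hsub
  rw [hsub, hpull] at htangent
  linarith

lemma integral_inv_succ_le [IsFiniteMeasure μ] (hP : Martingale P ℱ μ) (hb : 0 < b)
    (hPb : ∀ k ω, b ≤ P k ω) {δ : ℝ} (hδ : δ < 1) {k : ℕ}
    (hstep : ∀ᵐ ω ∂μ, |P (k + 1) ω - P k ω| ≤ δ * P k ω) :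
    ∫ ω, (P (k + 1) ω)⁻¹ ∂μ ≤ (1 + δ ^ 2 / (1 - δ)) * ∫ ω, (P k ω)⁻¹ ∂μ := by
  have hint := hP.integrable_inv hb hPb
  calc ∫ ω, (P (k + 1) ω)⁻¹ ∂μ
      ≤ ∫ ω, (2 + δ ^ 2 / (1 - δ)) * (P k ω)⁻¹ - (P k ω)⁻¹ ^ 2 * P (k + 1) ω ∂μ :=
        integral_mono_ae (hint (k + 1)) (((hint k).const_mul _).sub
          (hP.integrable_inv_sq_mul_succ hb hPb k)) <| hstep.mono fun ω h =>
            inv_le_of_abs_sub_le_mul hδ (hb.trans_le (hPb k ω)) h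
    _ = (1 + δ ^ 2 / (1 - δ)) * ∫ ω, (P k ω)⁻¹ ∂μ := by
        rw [integral_sub ((hint k).const_mul _) (hP.integrable_inv_sq_mul_succ hb hPb k),
          integral_const_mul, hP.integral_inv_sq_mul_succ hb hPb k]
        ring

lemma integral_inv_le_pow_mul [IsFiniteMeasure μ] (hP : Martingale P ℱ μ) (hb : 0 < b)
    (hPb : ∀ k ω, b ≤ P k ω) {δ : ℝ} (hδ : δ < 1) {n : ℕ}
    (hstep : ∀ k < n, ∀ᵐ ω ∂μ, |P (k + 1) ω - P k ω| ≤ δ * P k ω) :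
    ∫ ω, (P n ω)⁻¹ ∂μ ≤ (1 + δ ^ 2 / (1 - δ)) ^ n * ∫ ω, (P 0 ω)⁻¹ ∂μ := by
  have he : 0 ≤ 1 + δ ^ 2 / (1 - δ) := by
    have : 0 ≤ δ ^ 2 / (1 - δ) := div_nonneg (sq_nonneg δ) (by linarith)
    linarith
  induction n with
  | zero => simp
  | succ k ih =>
    calc ∫ ω, (P (k + 1) ω)⁻¹ ∂μ ≤ (1 + δ ^ 2 / (1 - δ)) * ∫ ω, (P k ω)⁻¹ ∂μ :=
          hP.integral_inv_succ_le hb hPb hδ (hstep k k.lt_succ_self)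
      _ ≤ (1 + δ ^ 2 / (1 - δ)) * ((1 + δ ^ 2 / (1 - δ)) ^ k * ∫ ω, (P 0 ω)⁻¹ ∂μ) := by
          gcongr
          exact ih fun j hj => hstep j (hj.trans k.lt_succ_self)
      _ = _ := by ring

lemma lintegral_sup'_abs_log_pow_le [IsProbabilityMeasure μ] (hP : Martingale P ℱ μ)
    (hb : 0 < b) (hPb : ∀ k ω, b ≤ P k ω) (n p : ℕ) {K₁ K₂ : ℝ}
    (hK₁ : 0 < K₁) (h₁ : ∫ ω, P n ω ∂μ ≤ K₁) (hK₂ : 0 < K₂) (h₂ : ∫ ω, (P n ω)⁻¹ ∂μ ≤ K₂) :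
    ∫⁻ ω, ENNReal.ofReal
        (((range (n + 1)).sup' nonempty_range_add_one fun k => |log (P k ω)|) ^ p) ∂μ
      ≤ ENNReal.ofReal ((2 * p) ^ p * (2 * √K₁ + 2 * √K₂)) := by
  have hpos : ∀ k ω, 0 < P k ω := fun k ω => hb.trans_le (hPb k ω)
  have hinv := hP.submartingale_inv hb hPb
  set X₁ := fun ω => (range (n + 1)).sup' nonempty_range_add_one fun k => P k ω
  set X₂ := fun ω => (range (n + 1)).sup' nonempty_range_add_one fun k => (P k ω)⁻¹
  have hpt : ∀ ω, ((range (n + 1)).sup' nonempty_range_add_one fun k => |log (P k ω)|) ^ p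
      ≤ (2 * p) ^ p * (√(X₁ ω) + √(X₂ ω)) := fun ω => by
    obtain ⟨j, hj, heq⟩ := exists_mem_eq_sup' nonempty_range_add_one fun k => |log (P k ω)|
    rw [heq]
    refine (abs_log_pow_le p (hpos j ω)).trans ?_
    gcongr
    · exact le_sup' (fun k => P k ω) hj
    · exact le_sup' (fun k => (P k ω)⁻¹) hj
  calc _ ≤ ∫⁻ ω, ENNReal.ofReal ((2 * p) ^ p)
          * (ENNReal.ofReal √(X₁ ω) + ENNReal.ofReal √(X₂ ω)) ∂μ := by
        refine lintegral_mono fun ω => ?_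
        rw [← ENNReal.ofReal_add (sqrt_nonneg _) (sqrt_nonneg _),
          ← ENNReal.ofReal_mul (by positivity)]
        exact ENNReal.ofReal_le_ofReal (hpt ω)
    _ = ENNReal.ofReal ((2 * p) ^ p)
          * (∫⁻ ω, ENNReal.ofReal √(X₁ ω) ∂μ + ∫⁻ ω, ENNReal.ofReal √(X₂ ω) ∂μ) := by
        rw [lintegral_const_mul' _ _ ENNReal.ofReal_ne_top,
          lintegral_add_left (hP.stronglyAdapted.measurable_sup' n).sqrt.ennreal_ofReal]
    _ ≤ ENNReal.ofReal ((2 * p) ^ p)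
          * (ENNReal.ofReal (2 * √K₁) + ENNReal.ofReal (2 * √K₂)) := by
        gcongr
        · exact hP.submartingale.lintegral_sqrt_sup'_le (fun k ω => (hpos k ω).le) n hK₁ h₁
        · exact hinv.lintegral_sqrt_sup'_le (fun k ω => (inv_pos.mpr (hpos k ω)).le) n hK₂ h₂
    _ = _ := by
        rw [← ENNReal.ofReal_add (by positivity) (by positivity),
          ← ENNReal.ofReal_mul (by positivity)]

end MeasureTheory.Martingale

section FiniteHorizon

variable {Ω : Type*} {m0 : MeasurableSpace Ω} {μ : Measure Ω} {ℱ : Filtration ℕ m0}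
  {M : ℕ → Ω → ℝ} {n : ℕ}

lemma ae_pow_le_of_abs_sub_le {δ : ℝ} (hδ : δ ≤ 1) (hM0 : ∀ᵐ ω ∂μ, M 0 ω = 1)
    (hstep : ∀ k < n, ∀ᵐ ω ∂μ, |M (k + 1) ω - M k ω| ≤ δ * M k ω) :
    ∀ k ≤ n, ∀ᵐ ω ∂μ, (1 - δ) ^ k ≤ M k ω := by
  intro k
  induction k with
  | zero => exact fun _ => hM0.mono fun ω h => by simp [h]
  | succ k ih =>
    intro hk
    filter_upwards [ih (by omega), hstep k hk] with ω hlow hst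
    have := (abs_le.mp hst).1
    calc (1 - δ) ^ (k + 1) = (1 - δ) * (1 - δ) ^ k := by ring
      _ ≤ (1 - δ) * M k ω := by gcongr
      _ ≤ M (k + 1) ω := by linarith

lemma martingale_comp_min [IsFiniteMeasure μ] (hadapt : ∀ k ≤ n, StronglyMeasurable[ℱ k] (M k))
    (hint : ∀ k ≤ n, Integrable (M k) μ) (hmart : ∀ k < n, μ[M (k + 1) | ℱ k] =ᵐ[μ] M k) :
    Martingale (fun k => M (min k n)) ℱ μ := by
  have hadapt' : StronglyAdapted ℱ fun k => M (min k n) := fun k =>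
    (hadapt _ (min_le_right k n)).mono (ℱ.mono (min_le_left k n))
  refine martingale_nat hadapt' (fun k => hint _ (min_le_right k n)) fun k => ?_
  by_cases hk : k < n
  · simp only [min_eq_left hk.le, min_eq_left (Nat.succ_le_of_lt hk)]
    exact (hmart k hk).symm
  · have hmin : min (k + 1) n = min k n := by omega
    simp only [hmin]
    rw [condExp_of_stronglyMeasurable (ℱ.le k) (hadapt' k) (hint _ (min_le_right k n))]

def clampedProcess (M : ℕ → Ω → ℝ) (a : ℝ) (n : ℕ) : ℕ → Ω → ℝ :=
  fun k ω => max (M (min k n) ω) (a ^ min k n)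

variable {a : ℝ}

lemma pow_le_clampedProcess (ha₀ : 0 ≤ a) (ha₁ : a ≤ 1) (k : ℕ) (ω : Ω) :
    a ^ n ≤ clampedProcess M a n k ω :=
  (pow_le_pow_of_le_one ha₀ ha₁ (min_le_right k n)).trans (le_max_right _ _)

lemma clampedProcess_ae_eq (hlow : ∀ k ≤ n, ∀ᵐ ω ∂μ, a ^ k ≤ M k ω) (k : ℕ) :
    clampedProcess M a n k =ᵐ[μ] M (min k n) :=
  (hlow _ (min_le_right k n)).mono fun _ h => max_eq_left h

lemma martingale_clampedProcess [IsFiniteMeasure μ]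
    (hadapt : ∀ k ≤ n, StronglyMeasurable[ℱ k] (M k)) (hint : ∀ k ≤ n, Integrable (M k) μ)
    (hmart : ∀ k < n, μ[M (k + 1) | ℱ k] =ᵐ[μ] M k)
    (hlow : ∀ k ≤ n, ∀ᵐ ω ∂μ, a ^ k ≤ M k ω) : Martingale (clampedProcess M a n) ℱ μ :=
  (martingale_comp_min hadapt hint hmart).congr
    (fun k => (((hadapt _ (min_le_right k n)).mono (ℱ.mono (min_le_left k n))).measurable.max
      measurable_const).stronglyMeasurable)
    fun k => (clampedProcess_ae_eq hlow k).symm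

lemma lintegral_sup'_abs_log_pow_le_of_abs_sub_le [IsProbabilityMeasure μ] {δ : ℝ}
    (hδ₀ : 0 ≤ δ) (hδ : δ < 1) (p : ℕ) (hadapt : ∀ k ≤ n, StronglyMeasurable[ℱ k] (M k))
    (hint : ∀ k ≤ n, Integrable (M k) μ) (hmart : ∀ k < n, μ[M (k + 1) | ℱ k] =ᵐ[μ] M k)
    (hM0 : ∀ᵐ ω ∂μ, M 0 ω = 1)
    (hstep : ∀ k < n, ∀ᵐ ω ∂μ, |M (k + 1) ω - M k ω| ≤ δ * M k ω) :
    ∫⁻ ω, ENNReal.ofReal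
        (((range (n + 1)).sup' nonempty_range_add_one fun k => |log (M k ω)|) ^ p) ∂μ
      ≤ ENNReal.ofReal ((2 * p) ^ p * (2 + 2 * √((1 + δ ^ 2 / (1 - δ)) ^ n))) := by
  set P := clampedProcess M (1 - δ) n
  have hlow := ae_pow_le_of_abs_sub_le hδ.le hM0 hstep
  have hP : Martingale P ℱ μ := martingale_clampedProcess hadapt hint hmart hlow
  have hb : 0 < (1 - δ) ^ n := pow_pos (by linarith) n
  have hPb := pow_le_clampedProcess (M := M) (n := n) (by linarith) (by linarith : 1 - δ ≤ 1)
  have hPM : ∀ k ≤ n, P k =ᵐ[μ] M k := fun k hk => by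
    simpa only [min_eq_left hk] using clampedProcess_ae_eq hlow k
  have hP0 : ∀ᵐ ω ∂μ, P 0 ω = 1 := by
    filter_upwards [hPM 0 n.zero_le, hM0] with ω h h0
    rw [h, h0]
  have hint₁ : ∫ ω, P n ω ∂μ = 1 := by
    rw [← integral_condExp (ℱ.le 0), integral_congr_ae (hP.condExp_ae_eq n.zero_le),
      integral_congr_ae hP0]
    simp
  have hint₂ : ∫ ω, (P n ω)⁻¹ ∂μ ≤ (1 + δ ^ 2 / (1 - δ)) ^ n := by
    refine (hP.integral_inv_le_pow_mul hb hPb hδ fun k hk => ?_).trans_eq ?_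
    · filter_upwards [hstep k hk, hPM k hk.le, hPM (k + 1) hk] with ω h h₀ h₁
      rwa [h₀, h₁]
    · rw [integral_congr_ae (hP0.mono fun ω h => by rw [h, inv_one]), integral_const]
      simp
  have hsup : ∀ᵐ ω ∂μ, ((range (n + 1)).sup' nonempty_range_add_one fun k => |log (M k ω)|)
      = (range (n + 1)).sup' nonempty_range_add_one fun k => |log (P k ω)| := by
    filter_upwards [(Filter.eventually_all_finset _).mpr fun k hk =>
      hPM k (Nat.lt_succ_iff.mp (mem_range.mp hk))] with ω h
    exact sup'_congr _ rfl fun k hk => by rw [h k hk]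
  rw [lintegral_congr_ae (hsup.mono fun ω h => by rw [h])]
  simpa using hP.lintegral_sup'_abs_log_pow_le hb hPb n p one_pos hint₁.le (by positivity) hint₂

end FiniteHorizon

lemma div_sqrt_floor_sq_add_one_lt_one (c : ℝ) : c / √(⌊c ^ 2⌋₊ + 1) < 1 := by
  rw [div_lt_one (by positivity)]
  calc c ≤ √(c ^ 2) := by rw [sqrt_sq_eq_abs]; exact le_abs_self c
    _ < √(⌊c ^ 2⌋₊ + 1) := sqrt_lt_sqrt (sq_nonneg c) (Nat.lt_floor_add_one _)

lemma div_sqrt_le_div_sqrt_floor_sq_add_one {c : ℝ} (hc : 0 ≤ c) {n : ℕ} (hn : c ^ 2 < n) :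
    c / √n ≤ c / √(⌊c ^ 2⌋₊ + 1) := by
  have : ⌊c ^ 2⌋₊ < n := (Nat.floor_lt (sq_nonneg c)).mpr hn
  gcongr
  exact_mod_cast this

lemma one_add_sq_div_pow_le_exp {c : ℝ} (hc : 0 ≤ c) {n : ℕ} (hn : c ^ 2 < n) :
    (1 + (c / √n) ^ 2 / (1 - c / √n)) ^ n ≤ exp (c ^ 2 / (1 - c / √(⌊c ^ 2⌋₊ + 1))) := by
  have hρ := div_sqrt_floor_sq_add_one_lt_one c
  have hδ := div_sqrt_le_div_sqrt_floor_sq_add_one hc hn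
  have hn₀ : (0 : ℝ) < n := (sq_nonneg c).trans_lt hn
  have he : 0 ≤ (c / √n) ^ 2 / (1 - c / √n) := div_nonneg (sq_nonneg _) (by linarith)
  calc (1 + (c / √n) ^ 2 / (1 - c / √n)) ^ n ≤ exp ((c / √n) ^ 2 / (1 - c / √n)) ^ n := by
        gcongr
        linarith [add_one_le_exp ((c / √n) ^ 2 / (1 - c / √n))]
    _ = exp (c ^ 2 / (1 - c / √n)) := by
        rw [← exp_nat_mul, div_pow, sq_sqrt hn₀.le]
        field_simp
    _ ≤ exp (c ^ 2 / (1 - c / √(⌊c ^ 2⌋₊ + 1))) := by gcongr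

/-- a uniform moment bound for the running maximum of `|ln M_k|`
for strictly positive discrete-time martingales with relative step size `c/√n`
(cf. (4.24)–(4.26) in Kusuoka). -/
theorem martingale_log_max_moment_bound (c : ℝ) (hc : 0 < c) (m : ℕ) :
    ∃ C : ℝ, ∀ n : ℕ, c ^ 2 < (n : ℝ) →
      ∀ (Ω : Type) (m0 : MeasurableSpace Ω) (μ : Measure Ω),
        IsProbabilityMeasure μ →
        ∀ G : ℕ → MeasurableSpace Ω, (∀ k, G k ≤ m0) → Monotone G →
        ∀ M : ℕ → Ω → ℝ,
          (∀ k ≤ n, StronglyMeasurable[G k] (M k)) →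
          (∀ k ≤ n, Integrable (M k) μ) →
          (∀ k < n, μ[M (k + 1) | G k] =ᵐ[μ] M k) →
          (∀ᵐ ω ∂μ, M 0 ω = 1) →
          (∀ k ≤ n, ∀ᵐ ω ∂μ, 0 < M k ω) →
          (∀ k < n, ∀ᵐ ω ∂μ, |M (k + 1) ω - M k ω| ≤ c / Real.sqrt n * M k ω) →
          ∫⁻ ω, ENNReal.ofReal
              (((Finset.range (n + 1)).sup' Finset.nonempty_range_add_one
                  fun k => |Real.log (M k ω)|) ^ (2 * m)) ∂μ
            ≤ ENNReal.ofReal C := by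
  refine ⟨(2 * ((2 * m : ℕ) : ℝ)) ^ (2 * m)
    * (2 + 2 * √(exp (c ^ 2 / (1 - c / √(⌊c ^ 2⌋₊ + 1))))), ?_⟩
  intro n hn Ω m0 μ _ G hGle hGmono M hadapt hint hmart hM0 _ hstep
  have hδ : c / √n < 1 := (div_sqrt_le_div_sqrt_floor_sq_add_one hc.le hn).trans_lt
    (div_sqrt_floor_sq_add_one_lt_one c)
  refine (lintegral_sup'_abs_log_pow_le_of_abs_sub_le (ℱ := ⟨G, hGmono, hGle⟩) (by positivity)
    hδ (2 * m) hadapt hint hmart hM0 hstep).trans (ENNReal.ofReal_le_ofReal ?_)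
  gcongr
  exact one_add_sq_div_pow_le_exp hc.le hn
end

section
/- Let c > 0. There exists a constant C = C(c) such that for every n ≥ 1, every probability space with a filtration (G_k)_{k=0,…,n}, every nonnegative martingale (M_k)_{k=0,…,n} with respect to (G_k) satisfying M_0 = 1 and |M_{k+1} − M_k| ≤ (c/√n) M_k almost surely, and all integers 0 ≤ k ≤ l ≤ n, one has E[(M_l − M_k)^4] ≤ C ((l − k)/n)². -/
open MeasureTheory

/-! Measure a random variable `Y` by `√(E Y⁴)`. If `X` is `𝒢`-measurable and `D` is a martingale
increment over `𝒢` with `|D| ≤ Z`, then in the expansion of `E (X + D)⁴` the cross term `E X³D`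
vanishes, `4XD³ ≤ 2X²D² + 2D⁴` absorbs the next odd term, and Cauchy–Schwarz bounds `E X²Z²`;
altogether `√(E (X + D)⁴) ≤ √(E X⁴) + 4 √(E Z⁴)`. For a martingale with relative steps
`ε = c/√n` this gives `√(E M_j⁴) ≤ (1 + 4ε²)ʲ ≤ e^{4c²}`, and then that `√(E (M_j - M_k)⁴)` grows
by at most `4ε² e^{4c²} = 4c² e^{4c²}/n` per step. -/

theorem abs_pow_mul_abs_pow_le_add {i j p : ℕ} (hij : i + j = p) (x y : ℝ) :
    |x| ^ i * |y| ^ j ≤ |x| ^ p + |y| ^ p := by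
  calc |x| ^ i * |y| ^ j ≤ max |x| |y| ^ i * max |x| |y| ^ j := by
        gcongr
        exacts [le_max_left _ _, le_max_right _ _]
    _ = max |x| |y| ^ p := by rw [← pow_add, hij]
    _ ≤ |x| ^ p + |y| ^ p := by
        rcases le_total |x| |y| with h | h
        · rw [max_eq_right h]; exact le_add_of_nonneg_left (by positivity)
        · rw [max_eq_left h]; exact le_add_of_nonneg_right (by positivity)

theorem add_pow_four_le (x d : ℝ) :
    (x + d) ^ 4 ≤ x ^ 4 + 4 * (x ^ 3 * d) + 8 * (x ^ 2 * d ^ 2) + 3 * d ^ 4 := by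
  have h : x ^ 4 + 4 * (x ^ 3 * d) + 8 * (x ^ 2 * d ^ 2) + 3 * d ^ 4 - (x + d) ^ 4
      = 2 * (d * (x - d)) ^ 2 := by ring
  linarith [sq_nonneg (d * (x - d))]

namespace MeasureTheory

variable {Ω : Type*} {m m0 : MeasurableSpace Ω} {μ : Measure Ω}

theorem integral_mul_le_sqrt_mul_sqrt {f g : Ω → ℝ} (hf : 0 ≤ᵐ[μ] f) (hg : 0 ≤ᵐ[μ] g)
    (hf2 : MemLp f 2 μ) (hg2 : MemLp g 2 μ) :
    ∫ ω, f ω * g ω ∂μ ≤ √(∫ ω, f ω ^ 2 ∂μ) * √(∫ ω, g ω ^ 2 ∂μ) := by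
  have := integral_mul_le_Lp_mul_Lq_of_nonneg Real.HolderConjugate.two_two hf hg
    (by rwa [ENNReal.ofReal_ofNat]) (by rwa [ENNReal.ofReal_ofNat])
  rw [Real.sqrt_eq_rpow, Real.sqrt_eq_rpow]
  simpa only [Real.rpow_two, one_div] using this

theorem MemLp.integrable_pow_four {f : Ω → ℝ} (hf : MemLp f 4 μ) :
    Integrable (fun ω => f ω ^ 4) μ := by
  simpa [Real.norm_eq_abs, Even.pow_abs (by decide : Even 4)] using
    (show MemLp f ((4 : ℕ) : ENNReal) μ by exact_mod_cast hf).integrable_norm_pow (by norm_num)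

theorem MemLp.integrable_pow_mul_pow {f g : Ω → ℝ} (hf : MemLp f 4 μ) (hg : MemLp g 4 μ)
    {i j : ℕ} (hij : i + j = 4) : Integrable (fun ω => f ω ^ i * g ω ^ j) μ :=
  (hf.integrable_pow_four.add hg.integrable_pow_four).mono'
    ((hf.1.pow i).mul (hg.1.pow j)) <| .of_forall fun ω => by
      simpa only [norm_mul, norm_pow, Real.norm_eq_abs, Even.pow_abs (by decide : Even 4),
        Pi.add_apply] using abs_pow_mul_abs_pow_le_add hij (f ω) (g ω)

theorem MemLp.lintegral_ofReal_pow_four_le {f : Ω → ℝ} (hf : MemLp f 4 μ) {a : ℝ}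
    (ha : √(∫ ω, f ω ^ 4 ∂μ) ≤ a) :
    ∫⁻ ω, ENNReal.ofReal (f ω ^ 4) ∂μ ≤ ENNReal.ofReal (a ^ 2) := by
  rw [← ofReal_integral_eq_lintegral_ofReal hf.integrable_pow_four
    (.of_forall fun ω => by positivity)]
  refine ENNReal.ofReal_le_ofReal ?_
  rw [← Real.sq_sqrt (integral_nonneg fun ω => by positivity : 0 ≤ ∫ ω, f ω ^ 4 ∂μ)]
  exact pow_le_pow_left₀ (Real.sqrt_nonneg _) ha 2

theorem integral_mul_eq_zero_of_condExp_eq_zero (hm : m ≤ m0) [SigmaFinite (μ.trim hm)]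
    {f g : Ω → ℝ} (hf : StronglyMeasurable[m] f) (hg : Integrable g μ)
    (hfg : Integrable (f * g) μ) (hgm : μ[g|m] =ᵐ[μ] 0) : ∫ ω, f ω * g ω ∂μ = 0 :=
  calc ∫ ω, f ω * g ω ∂μ = ∫ ω, μ[f * g|m] ω ∂μ := (integral_condExp hm).symm
    _ = ∫ ω, (f * μ[g|m]) ω ∂μ :=
        integral_congr_ae (condExp_mul_of_stronglyMeasurable_left hf hfg hg)
    _ = 0 := by
        rw [integral_congr_ae (hgm.mono fun ω h => show (f * μ[g|m]) ω = 0 by simp [h])]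
        simp

theorem sqrt_integral_add_pow_four_le [IsFiniteMeasure μ] (hm : m ≤ m0) {X D Z : Ω → ℝ}
    (hX : StronglyMeasurable[m] X) (hX4 : MemLp X 4 μ) (hD : AEStronglyMeasurable D μ)
    (hZ4 : MemLp Z 4 μ) (hDZ : ∀ᵐ ω ∂μ, |D ω| ≤ Z ω) (hDm : μ[D|m] =ᵐ[μ] 0) :
    √(∫ ω, (X ω + D ω) ^ 4 ∂μ) ≤ √(∫ ω, X ω ^ 4 ∂μ) + 4 * √(∫ ω, Z ω ^ 4 ∂μ) := by
  have hD4 : MemLp D 4 μ := hZ4.of_le hD <| hDZ.mono fun ω h => by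
    simpa only [Real.norm_eq_abs] using h.trans (le_abs_self _)
  have hX3D : Integrable (fun ω => X ω ^ 3 * D ω) μ := by
    simpa only [pow_one] using hX4.integrable_pow_mul_pow hD4 (i := 3) (j := 1) rfl
  have hX2D2 : Integrable (fun ω => X ω ^ 2 * D ω ^ 2) μ := hX4.integrable_pow_mul_pow hD4 rfl
  have hcross : ∫ ω, X ω ^ 3 * D ω ∂μ = 0 :=
    integral_mul_eq_zero_of_condExp_eq_zero hm (hX.pow 3) (hD4.integrable (by norm_num)) hX3D hDm
  have hexpand : ∫ ω, (X ω + D ω) ^ 4 ∂μ ≤ ∫ ω, X ω ^ 4 ∂μ + 4 * ∫ ω, X ω ^ 3 * D ω ∂μ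
      + 8 * ∫ ω, X ω ^ 2 * D ω ^ 2 ∂μ + 3 * ∫ ω, D ω ^ 4 ∂μ := by
    have := hX4.integrable_pow_four
    have := hD4.integrable_pow_four
    calc ∫ ω, (X ω + D ω) ^ 4 ∂μ
        ≤ ∫ ω, (X ω ^ 4 + 4 * (X ω ^ 3 * D ω) + 8 * (X ω ^ 2 * D ω ^ 2) + 3 * D ω ^ 4) ∂μ :=
          integral_mono (hX4.add hD4).integrable_pow_four (by fun_prop) fun ω =>
            add_pow_four_le _ _
      _ = _ := by
          rw [integral_add, integral_add, integral_add, integral_const_mul, integral_const_mul,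
            integral_const_mul] <;> fun_prop
  have hD2 : ∀ᵐ ω ∂μ, D ω ^ 2 ≤ Z ω ^ 2 := hDZ.mono fun ω h => by
    simpa only [sq_abs] using pow_le_pow_left₀ (abs_nonneg _) h 2
  have hmixed : ∫ ω, X ω ^ 2 * D ω ^ 2 ∂μ ≤ √(∫ ω, X ω ^ 4 ∂μ) * √(∫ ω, Z ω ^ 4 ∂μ) := by
    calc ∫ ω, X ω ^ 2 * D ω ^ 2 ∂μ ≤ ∫ ω, X ω ^ 2 * Z ω ^ 2 ∂μ :=
          integral_mono_ae hX2D2 (hX4.integrable_pow_mul_pow hZ4 rfl) <|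
            hD2.mono fun ω h => mul_le_mul_of_nonneg_left h (sq_nonneg _)
      _ ≤ √(∫ ω, (X ω ^ 2) ^ 2 ∂μ) * √(∫ ω, (Z ω ^ 2) ^ 2 ∂μ) := by
          refine integral_mul_le_sqrt_mul_sqrt (.of_forall fun ω => sq_nonneg _)
            (.of_forall fun ω => sq_nonneg _) ?_ ?_
          · refine (memLp_two_iff_integrable_sq (f := fun ω => X ω ^ 2) (hX4.1.pow 2)).2 ?_
            simpa only [← pow_mul] using hX4.integrable_pow_four
          · refine (memLp_two_iff_integrable_sq (f := fun ω => Z ω ^ 2) (hZ4.1.pow 2)).2 ?_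
            simpa only [← pow_mul] using hZ4.integrable_pow_four
      _ = √(∫ ω, X ω ^ 4 ∂μ) * √(∫ ω, Z ω ^ 4 ∂μ) := by simp only [← pow_mul]
  have hquartic : ∫ ω, D ω ^ 4 ∂μ ≤ ∫ ω, Z ω ^ 4 ∂μ :=
    integral_mono_ae hD4.integrable_pow_four hZ4.integrable_pow_four <| hD2.mono fun ω h => by
      simpa only [← pow_mul] using pow_le_pow_left₀ (sq_nonneg _) h 2
  have hX0 : 0 ≤ ∫ ω, X ω ^ 4 ∂μ := integral_nonneg fun ω => by positivity
  have hZ0 : 0 ≤ ∫ ω, Z ω ^ 4 ∂μ := integral_nonneg fun ω => by positivity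
  refine Real.sqrt_le_iff.mpr ⟨by positivity, ?_⟩
  nlinarith [Real.sq_sqrt hX0, Real.sq_sqrt hZ0, Real.sqrt_nonneg (∫ ω, X ω ^ 4 ∂μ),
    Real.sqrt_nonneg (∫ ω, Z ω ^ 4 ∂μ)]

end MeasureTheory

structure IsRelStepMartingale {Ω : Type*} {m0 : MeasurableSpace Ω} (μ : Measure Ω)
    (G : ℕ → MeasurableSpace Ω) (M : ℕ → Ω → ℝ) (n : ℕ) (ε : ℝ) : Prop where
  le_ambient : ∀ k, G k ≤ m0
  mono : Monotone G
  stronglyMeasurable : ∀ k ≤ n, StronglyMeasurable[G k] (M k)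
  integrable : ∀ k ≤ n, Integrable (M k) μ
  condExp_succ : ∀ k < n, μ[M (k + 1)|G k] =ᵐ[μ] M k
  abs_sub_le : ∀ k < n, ∀ᵐ ω ∂μ, |M (k + 1) ω - M k ω| ≤ ε * M k ω

namespace IsRelStepMartingale

variable {Ω : Type*} {m0 : MeasurableSpace Ω} {μ : Measure Ω} {G : ℕ → MeasurableSpace Ω}
  {M : ℕ → Ω → ℝ} {n : ℕ} {ε : ℝ}

theorem aestronglyMeasurable (h : IsRelStepMartingale μ G M n ε) {k : ℕ} (hk : k ≤ n) :
    AEStronglyMeasurable (M k) μ :=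
  ((h.stronglyMeasurable k hk).mono (h.le_ambient k)).aestronglyMeasurable

theorem condExp_sub_eq_zero [IsFiniteMeasure μ] (h : IsRelStepMartingale μ G M n ε) {k : ℕ}
    (hk : k < n) : μ[M (k + 1) - M k|G k] =ᵐ[μ] 0 := by
  have hMk := h.integrable k hk.le
  filter_upwards [condExp_sub (h.integrable (k + 1) hk) hMk (G k), h.condExp_succ k hk]
    with ω hsub hsucc
  rw [hsub, Pi.sub_apply, hsucc,
    condExp_of_stronglyMeasurable (h.le_ambient k) (h.stronglyMeasurable k hk.le) hMk, sub_self,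
    Pi.zero_apply]

theorem memLp_four (h : IsRelStepMartingale μ G M n ε) (h0 : MemLp (M 0) 4 μ) :
    ∀ k ≤ n, MemLp (M k) 4 μ := by
  intro k
  induction k with
  | zero => exact fun _ => h0
  | succ k ih =>
    intro hk
    refine ((ih (by omega)).const_mul (1 + |ε|)).of_le (h.aestronglyMeasurable hk) ?_
    filter_upwards [h.abs_sub_le k hk] with ω hω
    have hstep : ε * M k ω ≤ |ε| * |M k ω| := by rw [← abs_mul]; exact le_abs_self _
    rw [Real.norm_eq_abs, Real.norm_eq_abs, abs_mul, abs_of_nonneg (by positivity : 0 ≤ 1 + |ε|)]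
    linarith [abs_sub_abs_le_abs_sub (M (k + 1) ω) (M k ω)]

theorem sqrt_integral_sub_pow_four_succ_le [IsFiniteMeasure μ]
    (h : IsRelStepMartingale μ G M n ε) (hM4 : ∀ k ≤ n, MemLp (M k) 4 μ) {j : ℕ} (hj : j < n)
    {N : Ω → ℝ} (hN : StronglyMeasurable[G j] N) (hN4 : MemLp N 4 μ) :
    √(∫ ω, (M (j + 1) ω - N ω) ^ 4 ∂μ)
      ≤ √(∫ ω, (M j ω - N ω) ^ 4 ∂μ) + 4 * ε ^ 2 * √(∫ ω, M j ω ^ 4 ∂μ) := by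
  have := sqrt_integral_add_pow_four_le (h.le_ambient j) ((h.stronglyMeasurable j hj.le).sub hN)
    ((hM4 j hj.le).sub hN4) ((h.aestronglyMeasurable hj).sub (h.aestronglyMeasurable hj.le))
    ((hM4 j hj.le).const_mul ε) (h.abs_sub_le j hj) (h.condExp_sub_eq_zero hj)
  simp only [Pi.sub_apply, sub_add_sub_cancel', mul_pow, integral_const_mul,
    show ε ^ 4 = (ε ^ 2) ^ 2 by ring] at this
  rwa [Real.sqrt_mul (by positivity), Real.sqrt_sq (sq_nonneg ε), ← mul_assoc] at this

theorem sqrt_integral_pow_four_le [IsFiniteMeasure μ] (h : IsRelStepMartingale μ G M n ε)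
    (hM4 : ∀ k ≤ n, MemLp (M k) 4 μ) :
    ∀ j ≤ n, √(∫ ω, M j ω ^ 4 ∂μ) ≤ (1 + 4 * ε ^ 2) ^ j * √(∫ ω, M 0 ω ^ 4 ∂μ) := by
  intro j
  induction j with
  | zero => simp
  | succ j ih =>
    intro hj
    have hstep := h.sqrt_integral_sub_pow_four_succ_le hM4 hj stronglyMeasurable_const
      (memLp_const 0)
    simp only [sub_zero] at hstep
    calc √(∫ ω, M (j + 1) ω ^ 4 ∂μ) ≤ (1 + 4 * ε ^ 2) * √(∫ ω, M j ω ^ 4 ∂μ) := by linarith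
      _ ≤ (1 + 4 * ε ^ 2) * ((1 + 4 * ε ^ 2) ^ j * √(∫ ω, M 0 ω ^ 4 ∂μ)) := by
          gcongr
          exact ih (by omega)
      _ = (1 + 4 * ε ^ 2) ^ (j + 1) * √(∫ ω, M 0 ω ^ 4 ∂μ) := by ring

theorem sqrt_integral_sub_pow_four_le [IsFiniteMeasure μ] (h : IsRelStepMartingale μ G M n ε)
    (hM4 : ∀ k ≤ n, MemLp (M k) 4 μ) {B : ℝ} (hB : ∀ j ≤ n, √(∫ ω, M j ω ^ 4 ∂μ) ≤ B)
    {k l : ℕ} (hkl : k ≤ l) (hln : l ≤ n) :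
    √(∫ ω, (M l ω - M k ω) ^ 4 ∂μ) ≤ ((l : ℝ) - k) * (4 * ε ^ 2 * B) := by
  induction l, hkl using Nat.le_induction with
  | base => simp
  | succ j hkj ih =>
    have hstep := h.sqrt_integral_sub_pow_four_succ_le hM4 hln
      ((h.stronglyMeasurable k (by omega)).mono (h.mono hkj)) (hM4 k (by omega))
    have hBj : 4 * ε ^ 2 * √(∫ ω, M j ω ^ 4 ∂μ) ≤ 4 * ε ^ 2 * B := by
      gcongr
      exact hB j (by omega)
    push_cast
    linarith [ih (by omega)]

end IsRelStepMartingale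

theorem martingale_increment_fourth_moment_bound_general (c : ℝ) :
    ∃ C : ℝ, ∀ n : ℕ, 1 ≤ n →
      ∀ (Ω : Type) (m0 : MeasurableSpace Ω) (μ : Measure Ω),
        IsProbabilityMeasure μ →
        ∀ G : ℕ → MeasurableSpace Ω, (∀ k, G k ≤ m0) → Monotone G →
        ∀ M : ℕ → Ω → ℝ,
          (∀ k ≤ n, StronglyMeasurable[G k] (M k)) →
          (∀ k ≤ n, Integrable (M k) μ) →
          (∀ k < n, μ[M (k + 1) | G k] =ᵐ[μ] M k) →
          (∀ᵐ ω ∂μ, M 0 ω = 1) →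
          (∀ k ≤ n, ∀ᵐ ω ∂μ, 0 ≤ M k ω) →
          (∀ k < n, ∀ᵐ ω ∂μ, |M (k + 1) ω - M k ω| ≤ c / Real.sqrt n * M k ω) →
          ∀ k l : ℕ, k ≤ l → l ≤ n →
            ∫⁻ ω, ENNReal.ofReal ((M l ω - M k ω) ^ 4) ∂μ
              ≤ ENNReal.ofReal (C * (((l : ℝ) - (k : ℝ)) / n) ^ 2) := by
  refine ⟨16 * c ^ 4 * Real.exp (4 * c ^ 2) ^ 2, ?_⟩
  intro n hn Ω m0 μ _ G hG hGm M hSM hInt hmart hM0 _ hstep k l hkl hln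
  have h : IsRelStepMartingale μ G M n (c / √n) := ⟨hG, hGm, hSM, hInt, hmart, hstep⟩
  have hM4 := h.memLp_four ((memLp_const 1).ae_eq (hM0.mono fun ω hω => hω.symm))
  have hε : (c / √n) ^ 2 = c ^ 2 / n := by rw [div_pow, Real.sq_sqrt n.cast_nonneg]
  have h0 : ∫ ω, M 0 ω ^ 4 ∂μ = 1 := by
    rw [integral_congr_ae (g := fun _ => 1) (hM0.mono fun ω hω => by simp only [hω, one_pow])]
    simp
  have hB : ∀ j ≤ n, √(∫ ω, M j ω ^ 4 ∂μ) ≤ Real.exp (4 * c ^ 2) := fun j hj =>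
    calc √(∫ ω, M j ω ^ 4 ∂μ) ≤ (1 + 4 * (c / √n) ^ 2) ^ j := by
          simpa [h0] using h.sqrt_integral_pow_four_le hM4 j hj
      _ ≤ (1 + 4 * (c / √n) ^ 2) ^ n :=
          pow_le_pow_right₀ (le_add_of_nonneg_right (by positivity)) hj
      _ ≤ Real.exp (4 * (c / √n) ^ 2) ^ n :=
          pow_le_pow_left₀ (by positivity) (by linarith [Real.add_one_le_exp (4 * (c / √n) ^ 2)]) n
      _ = Real.exp (4 * c ^ 2) := by
          rw [← Real.exp_nat_mul, hε]
          field_simp [show (n : ℝ) ≠ 0 from Nat.cast_ne_zero.mpr (by omega)]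
  have hlk : MemLp (fun ω => M l ω - M k ω) 4 μ := (hM4 l hln).sub (hM4 k (hkl.trans hln))
  convert hlk.lintegral_ofReal_pow_four_le (h.sqrt_integral_sub_pow_four_le hM4 hB hkl hln)
    using 2
  rw [hε]
  ring

/-- the fourth-moment increment bound
`E[(M_l - M_k)^4] ≤ C ((l-k)/n)²` for nonnegative discrete-time martingales with
relative step size `c/√n` (tightness estimate of Lemma 3.2). -/
theorem martingale_increment_fourth_moment_bound (c : ℝ) (hc : 0 < c) :
    ∃ C : ℝ, ∀ n : ℕ, 1 ≤ n →
      ∀ (Ω : Type) (m0 : MeasurableSpace Ω) (μ : Measure Ω),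
        IsProbabilityMeasure μ →
        ∀ G : ℕ → MeasurableSpace Ω, (∀ k, G k ≤ m0) → Monotone G →
        ∀ M : ℕ → Ω → ℝ,
          (∀ k ≤ n, StronglyMeasurable[G k] (M k)) →
          (∀ k ≤ n, Integrable (M k) μ) →
          (∀ k < n, μ[M (k + 1) | G k] =ᵐ[μ] M k) →
          (∀ᵐ ω ∂μ, M 0 ω = 1) →
          (∀ k ≤ n, ∀ᵐ ω ∂μ, 0 ≤ M k ω) →
          (∀ k < n, ∀ᵐ ω ∂μ, |M (k + 1) ω - M k ω| ≤ c / Real.sqrt n * M k ω) →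
          ∀ k l : ℕ, k ≤ l → l ≤ n →
            ∫⁻ ω, ENNReal.ofReal ((M l ω - M k ω) ^ 4) ∂μ
              ≤ ENNReal.ofReal (C * (((l : ℝ) - (k : ℝ)) / n) ^ 2) :=
  martingale_increment_fourth_moment_bound_general c
end

section
/- Consider the n-period He model: Ω = {1, …, d+1}^n with the uniform product probability measure P, ξ_m(ω) = v_{ω_m}, filtration F_k = σ(ξ_1, …, ξ_k), and asset prices S^{n,i}_k = s_i Π_{m=1}^k (1 + n^{-1/2}⟨σ_i, ξ_m⟩) for i = 1, …, d, where v_1, …, v_{d+1} ∈ ℝ^d satisfy the simplex conditions, σ is an invertible d×d matrix with rows σ_1, …, σ_d, s_i > 0, and n is large enough that 1 + n^{-1/2}⟨σ_i, v_j⟩ > 0 for all i, j. If Q is any probability measure on (Ω, F_n) such that each process (S^{n,i}_k)_{k=0,…,n} is a Q-martingale with respect to (F_k)_{k=0,…,n}, then Q = P. -/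
/-!
Tested against `1_C / S_k` for an atom `C` of `F_k`, the martingale condition says that the
conditional law `w` of the next step on `C` has `∑ⱼ wⱼ ⟨σᵢ, vⱼ⟩ = 0` for every `i`; as `σ` is
invertible, `∑ⱼ wⱼ vⱼ = 0`. Pairing with `vᵢ` and using the simplex conditions gives
`(d + 1) wᵢ = ∑ⱼ wⱼ`, so every conditional step law under `Q` is uniform, and by induction over
`k` each atom of `F_k` has `Q`-mass `(d + 1)⁻ᵏ`.
-/

open Matrix

/-- The sample space of the `n`-period He model: sequences of `n` directions
among the `d+1` simplex vertices. -/
abbrev HeOmega (d n : ℕ) := Fin n → Fin (d + 1)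

open Finset

theorem Fin.prod_filter_val_lt_succ {M : Type*} [CommMonoid M] {n : ℕ} (f : Fin n → M)
    (k : Fin n) :
    ∏ m ∈ univ.filter (fun m : Fin n => (m : ℕ) < k + 1), f m
      = (∏ m ∈ univ.filter (fun m : Fin n => (m : ℕ) < k), f m) * f k := by
  have : univ.filter (fun m : Fin n => (m : ℕ) < k + 1)
      = insert k (univ.filter fun m : Fin n => (m : ℕ) < k) := by
    ext m
    simp [le_iff_eq_or_lt, Fin.val_inj]
  rw [this, prod_insert (by simp), mul_comm]

theorem Matrix.sub_mul_add_mul_sum_eq_zero_of_vecMul_eq_zero {ι κ R : Type*} [Fintype ι]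
    [Fintype κ] [DecidableEq ι] [CommRing R] {v : Matrix ι κ R} {a b : R}
    (hdiag : ∀ i, v i ⬝ᵥ v i = a) (hoff : ∀ i j, i ≠ j → v i ⬝ᵥ v j = b) {w : ι → R}
    (hw : w ᵥ* v = 0) (i : ι) :
    (a - b) * w i + b * ∑ j, w j = 0 := by
  have hgram : v i ⬝ᵥ (w ᵥ* v) = ∑ j, w j * (v i ⬝ᵥ v j) := by
    simp only [dotProduct, vecMul, mul_sum]
    rw [sum_comm]
    exact sum_congr rfl fun _ _ => sum_congr rfl fun _ _ => by ring
  calc (a - b) * w i + b * ∑ j, w j = w i * a + ∑ j ∈ univ.erase i, w j * b := by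
        rw [← add_sum_erase _ _ (mem_univ i), ← sum_mul]; ring
    _ = ∑ j, w j * (v i ⬝ᵥ v j) := by
        rw [← add_sum_erase _ _ (mem_univ i), hdiag]
        congr 1
        exact sum_congr rfl fun j hj => by rw [hoff i j (ne_of_mem_erase hj).symm]
    _ = 0 := by rw [← hgram, hw, dotProduct_zero]

section Cylinder

variable {α : Type*} [Fintype α] [DecidableEq α] {n : ℕ}

/-- The atom of `F_k` containing `ω`. -/
def cylinder (k : ℕ) (ω : Fin n → α) : Finset (Fin n → α) :=
  univ.filter fun ω' => ∀ m : Fin n, (m : ℕ) < k → ω' m = ω m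

@[simp]
theorem mem_cylinder {k : ℕ} {ω ω' : Fin n → α} :
    ω' ∈ cylinder k ω ↔ ∀ m : Fin n, (m : ℕ) < k → ω' m = ω m := by
  simp [cylinder]

theorem cylinder_zero (ω : Fin n → α) : cylinder 0 ω = univ := by
  ext
  simp

theorem cylinder_self (ω : Fin n → α) : cylinder n ω = {ω} := by
  ext ω'
  simp only [mem_cylinder, mem_singleton, funext_iff]
  exact ⟨fun h m => h m m.isLt, fun h m _ => h m⟩

theorem cylinder_succ (k : Fin n) (ω : Fin n → α) :
    cylinder (k + 1) ω = (cylinder k ω).filter fun ω' => ω' k = ω k := by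
  ext ω'
  simp only [mem_cylinder, mem_filter, Nat.lt_succ_iff_lt_or_eq, or_imp, forall_and,
    Fin.val_inj, forall_eq]

theorem mem_cylinder_congr {k : ℕ} {ω ω₁ ω₂ : Fin n → α} (h : ω₁ ∈ cylinder k ω₂) :
    ω₁ ∈ cylinder k ω ↔ ω₂ ∈ cylinder k ω := by
  simp only [mem_cylinder] at h ⊢
  exact ⟨fun h₁ m hm => (h m hm).symm.trans (h₁ m hm), fun h₂ m hm => (h m hm).trans (h₂ m hm)⟩

/-- The conditional law of the `k`-th step on the atom `cylinder k ω`, up to normalisation. -/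
def stepWeights (Q : (Fin n → α) → ℝ) (k : Fin n) (ω : Fin n → α) (j : α) : ℝ :=
  ∑ ω' ∈ (cylinder k ω).filter (fun ω' => ω' k = j), Q ω'

variable (Q : (Fin n → α) → ℝ) (k : Fin n) (ω : Fin n → α)

theorem sum_stepWeights_mul (f : α → ℝ) :
    ∑ j, stepWeights Q k ω j * f j = ∑ ω' ∈ cylinder k ω, Q ω' * f (ω' k) := by
  rw [← sum_fiberwise (cylinder k ω) (fun ω' => ω' k)]
  refine sum_congr rfl fun j _ => ?_
  rw [stepWeights, sum_mul]
  exact sum_congr rfl fun ω' hω' => by rw [(mem_filter.1 hω').2]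

theorem sum_stepWeights : ∑ j, stepWeights Q k ω j = ∑ ω' ∈ cylinder k ω, Q ω' := by
  simpa using sum_stepWeights_mul Q k ω 1

theorem stepWeights_self : stepWeights Q k ω (ω k) = ∑ ω' ∈ cylinder (k + 1) ω, Q ω' := by
  rw [cylinder_succ, stepWeights]

end Cylinder

section MartingaleMeasure

variable {α : Type*} [Fintype α] [DecidableEq α] {n : ℕ}

theorem eq_one_div_card_pow_of_stepWeights_uniform (Q : (Fin n → α) → ℝ) (hQ : ∑ ω, Q ω = 1)
    (huniform : ∀ k ω j, Fintype.card α * stepWeights Q k ω j = ∑ j', stepWeights Q k ω j')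
    (ω : Fin n → α) :
    Q ω = 1 / (Fintype.card α : ℝ) ^ n := by
  have hmass : ∀ k ≤ n, (Fintype.card α : ℝ) ^ k * ∑ ω' ∈ cylinder k ω, Q ω' = 1 := by
    intro k hk
    induction k with
    | zero => simp [cylinder_zero, hQ]
    | succ k ih =>
      have hkn : k < n := hk
      rw [← stepWeights_self Q ⟨k, hkn⟩, pow_succ, mul_assoc, huniform, sum_stepWeights]
      exact ih hkn.le
  have := hmass n le_rfl
  rw [cylinder_self, sum_singleton] at this
  exact eq_one_div_of_mul_eq_one_right this

theorem sum_stepWeights_mul_eq_of_martingale (Q : (Fin n → α) → ℝ) {s : ℝ} (hs : s ≠ 0)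
    {R : α → ℝ} (hR : ∀ j, R j ≠ 0) {S : ℕ → (Fin n → α) → ℝ}
    (hS : ∀ k ω, S k ω = s * ∏ m ∈ univ.filter (fun m : Fin n => (m : ℕ) < k), R (ω m))
    (k : Fin n)
    (hmart : ∀ φ : (Fin n → α) → ℝ,
      (∀ ω ω' : Fin n → α, (∀ m : Fin n, (m : ℕ) < k → ω m = ω' m) → φ ω = φ ω') →
      ∑ ω, Q ω * φ ω * S (k + 1) ω = ∑ ω, Q ω * φ ω * S k ω)
    (ω : Fin n → α) :
    ∑ j, stepWeights Q k ω j * R j = ∑ j, stepWeights Q k ω j := by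
  have hS_ne : ∀ ω, S k ω ≠ 0 := fun ω => by
    rw [hS]
    exact mul_ne_zero hs (prod_ne_zero_iff.2 fun m _ => hR _)
  have hS_succ : ∀ ω, S (k + 1) ω = S k ω * R (ω k) := fun ω => by
    rw [hS, hS, Fin.prod_filter_val_lt_succ, mul_assoc]
  have hS_adapted : ∀ ω₁ ω₂, ω₁ ∈ cylinder k ω₂ → S k ω₁ = S k ω₂ := fun ω₁ ω₂ h => by
    rw [hS, hS]
    exact congrArg _ (prod_congr rfl fun m hm => by rw [mem_cylinder.1 h m (mem_filter.1 hm).2])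
  let φ ω' := if ω' ∈ cylinder k ω then (S k ω')⁻¹ else 0
  have hφ : ∀ ω₁ ω₂ : Fin n → α, (∀ m : Fin n, (m : ℕ) < k → ω₁ m = ω₂ m) → φ ω₁ = φ ω₂ := by
    intro ω₁ ω₂ h
    have h' : ω₁ ∈ cylinder k ω₂ := mem_cylinder.2 h
    simp only [φ, mem_cylinder_congr h', hS_adapted _ _ h']
  have hφ_sum : ∀ X : (Fin n → α) → ℝ,
      ∑ ω', Q ω' * φ ω' * X ω' = ∑ ω' ∈ cylinder k ω, Q ω' * (S k ω')⁻¹ * X ω' := by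
    intro X
    simp only [φ, mul_ite, ite_mul, mul_zero, zero_mul]
    rw [sum_ite_mem, univ_inter]
  have h := hmart φ hφ
  have hcancel : ∀ ω' (x : ℝ), Q ω' * (S k ω')⁻¹ * (S k ω' * x) = Q ω' * x := fun ω' x => by
    rw [mul_assoc, inv_mul_cancel_left₀ (hS_ne ω')]
  have hcancel' : ∀ ω', Q ω' * (S k ω')⁻¹ * S k ω' = Q ω' := fun ω' =>
    inv_mul_cancel_right₀ (hS_ne ω') _
  rw [hφ_sum, hφ_sum] at h
  simp only [hS_succ, hcancel, hcancel'] at h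
  rwa [sum_stepWeights_mul, sum_stepWeights]

end MartingaleMeasure

/-- Probability measures on `Ω` are identified with their weight functions `Q`, the filtration
`F_k` consists of the events depending only on the first `k` coordinates, and the martingale
property of `S` under `Q` is expressed by testing against all `F_k`-measurable functions `φ`. -/
theorem he_model_unique_martingale_measure_general (d n : ℕ)
    (v : Fin (d + 1) → Fin d → ℝ)
    (hnorm : ∀ i, ∑ k, v i k ^ 2 = (d : ℝ))
    (hinner : ∀ i j, i ≠ j → ∑ k, v i k * v j k = -1)
    (σ : Matrix (Fin d) (Fin d) ℝ) (hσ : IsUnit σ.det)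
    (s : Fin d → ℝ) (hs : ∀ i, 0 < s i)
    (hpos : ∀ i j, 0 < 1 + (1 / Real.sqrt n) * ∑ l, σ i l * v j l)
    (S : Fin d → ℕ → HeOmega d n → ℝ)
    (hS : ∀ i k ω, S i k ω =
      s i * ∏ m ∈ Finset.univ.filter (fun m : Fin n => (m : ℕ) < k),
        (1 + (1 / Real.sqrt n) * ∑ l, σ i l * v (ω m) l))
    (Q : HeOmega d n → ℝ)
    (hQ1 : ∑ ω, Q ω = 1)
    (hmart : ∀ i : Fin d, ∀ k < n, ∀ φ : HeOmega d n → ℝ,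
      (∀ ω ω' : HeOmega d n, (∀ m : Fin n, (m : ℕ) < k → ω m = ω' m) → φ ω = φ ω') →
      ∑ ω, Q ω * φ ω * S i (k + 1) ω = ∑ ω, Q ω * φ ω * S i k ω) :
    ∀ ω, Q ω = 1 / ((d : ℝ) + 1) ^ n := by
  intro ω
  convert eq_one_div_card_pow_of_stepWeights_uniform Q hQ1 (fun k ω' j => ?_) ω using 3
  · simp
  set w := stepWeights Q k ω'
  have hc : 1 / Real.sqrt n ≠ 0 := by
    have : (0 : ℝ) < n := by exact_mod_cast k.pos
    positivity
  have hmean : ∀ i, ∑ j, w j * ∑ l, σ i l * v j l = 0 := fun i => by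
    have h := sum_stepWeights_mul_eq_of_martingale Q (hs i).ne' (fun j => (hpos i j).ne') (hS i)
      k (hmart i k k.isLt) ω'
    simpa only [mul_add, mul_one, sum_add_distrib, mul_left_comm _ (1 / Real.sqrt n),
      ← mul_sum, add_eq_left, mul_eq_zero, hc, false_or] using h
  have hw : w ᵥ* v = 0 := by
    refine eq_zero_of_mulVec_eq_zero hσ.ne_zero (funext fun i => ?_)
    simp only [mulVec, vecMul, dotProduct, mul_sum, Pi.zero_apply, ← hmean i]
    rw [sum_comm]
    exact sum_congr rfl fun _ _ => sum_congr rfl fun _ _ => by ring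
  have := sub_mul_add_mul_sum_eq_zero_of_vecMul_eq_zero (a := (d : ℝ)) (b := -1)
    (fun i => by simp [dotProduct, ← sq, hnorm]) hinner hw j
  rw [Fintype.card_fin, Nat.cast_add, Nat.cast_one]
  linarith

/-- in the `n`-period He model, the uniform measure is the unique
martingale measure for the asset prices.  Probability measures on the finite
space `Ω = {1,…,d+1}ⁿ` are identified with their weight functions `Q`, the
filtration `F_k = σ(ξ₁,…,ξ_k)` consists of the events depending only on the
first `k` coordinates, and the martingale property of `S` under `Q` is expressed
by testing against all `F_k`-measurable functions `φ`. -/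
theorem he_model_unique_martingale_measure (d n : ℕ) (hd : 1 ≤ d) (hn : 1 ≤ n)
    (v : Fin (d + 1) → Fin d → ℝ)
    (hnorm : ∀ i, ∑ k, v i k ^ 2 = (d : ℝ))
    (hinner : ∀ i j, i ≠ j → ∑ k, v i k * v j k = -1)
    (σ : Matrix (Fin d) (Fin d) ℝ) (hσ : IsUnit σ.det)
    (s : Fin d → ℝ) (hs : ∀ i, 0 < s i)
    (hpos : ∀ i j, 0 < 1 + (1 / Real.sqrt n) * ∑ l, σ i l * v j l)
    (S : Fin d → ℕ → HeOmega d n → ℝ)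
    (hS : ∀ i k ω, S i k ω =
      s i * ∏ m ∈ Finset.univ.filter (fun m : Fin n => (m : ℕ) < k),
        (1 + (1 / Real.sqrt n) * ∑ l, σ i l * v (ω m) l))
    (Q : HeOmega d n → ℝ)
    (hQ0 : ∀ ω, 0 ≤ Q ω) (hQ1 : ∑ ω, Q ω = 1)
    (hmart : ∀ i : Fin d, ∀ k < n, ∀ φ : HeOmega d n → ℝ,
      (∀ ω ω' : HeOmega d n, (∀ m : Fin n, (m : ℕ) < k → ω m = ω' m) → φ ω = φ ω') →
      ∑ ω, Q ω * φ ω * S i (k + 1) ω = ∑ ω, Q ω * φ ω * S i k ω) :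
    ∀ ω, Q ω = 1 / ((d : ℝ) + 1) ^ n :=
  he_model_unique_martingale_measure_general d n v hnorm hinner σ hσ s hs hpos S hS Q hQ1 hmart
end
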